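/- arXiv:1811.06294 — 8 statements merged into one kernel-verified Lean document; each statement's English description precedes it below -/
import Mathlib

section
/- For every σ ∈ ℝ and every ε ∈ [0,1] there is a constant C > 0 such that for all s,t ≥ 0 and all pairs of sequences (a,b) : ℤ³ → ℂ × ℂ one has ‖S(t)(a,b) − S(s)(a,b)‖_{𝓗^σ} ≤ C |t−s|^ε ‖(a,b)‖_{𝓗^{σ+4ε}}. -/
open scoped ENNReal

noncomputable section

/-- `|n|²` for a frequency `n ∈ ℤ³`. -/
def nsq (n : Fin 3 → ℤ) : ℝ := ∑ i, ((n i : ℝ)) ^ 2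

/-- the Japanese bracket `⟨n⟩ = (1+|n|²)^{1/2}`. -/
def jap (n : Fin 3 → ℤ) : ℝ := Real.sqrt (1 + nsq n)

/-- `λ_n = (3/4 + |n|⁴)^{1/2}`. -/
def lam (n : Fin 3 → ℤ) : ℝ := Real.sqrt (3 / 4 + (nsq n) ^ 2)

/-- Action of the matrix `M_λ(t)` on a vector in `ℂ²`. -/
def Mmat (l t : ℝ) (z : ℂ × ℂ) : ℂ × ℂ :=
  (((Real.cos (t * l) + Real.sin (t * l) / (2 * l) : ℝ) : ℂ) * z.1
      + ((Real.sin (t * l) / l : ℝ) : ℂ) * z.2,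
    ((-((l - 1 / (4 * l)) * Real.sin (t * l)) : ℝ) : ℂ) * z.1
      + ((Real.cos (t * l) - Real.sin (t * l) / (2 * l) : ℝ) : ℂ) * z.2)

/-- The damped beam propagator `S(t)`, acting coordinatewise on Fourier coefficients. -/
def Sprop (t : ℝ) (u : (Fin 3 → ℤ) → ℂ × ℂ) : (Fin 3 → ℤ) → ℂ × ℂ :=
  fun n => ((Real.exp (-t / 2) : ℝ) : ℂ) • Mmat (lam n) t (u n)

/-- The squared Fourier-side Sobolev norm of `𝓗^σ = H^σ × H^{σ-2}`, with values in `ℝ≥0∞`. -/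
def sobNormSq (σ : ℝ) (u : (Fin 3 → ℤ) → ℂ × ℂ) : ℝ≥0∞ :=
  ∑' n : Fin 3 → ℤ,
    ENNReal.ofReal (jap n ^ (2 * σ) * ‖(u n).1‖ ^ 2 + jap n ^ (2 * σ - 4) * ‖(u n).2‖ ^ 2)

/-- The Fourier-side Sobolev norm of `𝓗^σ = H^σ × H^{σ-2}`. -/
def sobNorm (σ : ℝ) (u : (Fin 3 → ℤ) → ℂ × ℂ) : ℝ≥0∞ :=
  (sobNormSq σ u) ^ (1 / 2 : ℝ)



private lemma sin_lip' (a b : ℝ) : |Real.sin a - Real.sin b| ≤ |a - b| := by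
  rw [Real.sin_sub_sin]
  calc |2 * Real.sin ((a-b)/2) * Real.cos ((a+b)/2)|
      = 2 * |Real.sin ((a-b)/2)| * |Real.cos ((a+b)/2)| := by
        rw [abs_mul, abs_mul]; norm_num
    _ ≤ 2 * |(a-b)/2| * 1 := by
        apply mul_le_mul _ (Real.abs_cos_le_one _) (abs_nonneg _) (by positivity)
        have := Real.abs_sin_le_abs (x := (a-b)/2)
        nlinarith [abs_nonneg ((a-b)/2)]
    _ = |a - b| := by rw [abs_div, abs_two]; ring
private lemma cos_lip' (a b : ℝ) : |Real.cos a - Real.cos b| ≤ |a - b| := by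
  rw [Real.cos_sub_cos]
  calc |-2 * Real.sin ((a+b)/2) * Real.sin ((a-b)/2)|
      = 2 * |Real.sin ((a+b)/2)| * |Real.sin ((a-b)/2)| := by
        rw [abs_mul, abs_mul, abs_neg]; norm_num
    _ ≤ 2 * 1 * |(a-b)/2| := by
        apply mul_le_mul _ (Real.abs_sin_le_abs) (abs_nonneg _) (by positivity)
        have := Real.abs_sin_le_one ((a+b)/2)
        nlinarith
    _ = |a - b| := by rw [abs_div, abs_two]; ring

private lemma exp_lip0 (x y : ℝ) (hx : x ≤ 0) (hxy : y ≤ x) :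
    Real.exp x - Real.exp y ≤ x - y := by
  have h1 := Real.add_one_le_exp (y - x)
  have h2 : Real.exp x ≤ 1 := Real.exp_le_one_iff.mpr hx
  have h3 : Real.exp y = Real.exp x * Real.exp (y - x) := by
    rw [← Real.exp_add]; ring_nf
  nlinarith [Real.exp_pos x, Real.exp_pos (y - x)]

private lemma exp_lip (s t : ℝ) (hs : 0 ≤ s) (ht : 0 ≤ t) :
    |Real.exp (-t/2) - Real.exp (-s/2)| ≤ |t - s| / 2 := by
  rcases le_total s t with h | h
  · have h1 : Real.exp (-t/2) ≤ Real.exp (-s/2) := Real.exp_le_exp.mpr (by linarith)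
    rw [abs_sub_comm, abs_of_nonneg (by linarith : (0:ℝ) ≤ Real.exp (-s/2) - Real.exp (-t/2)),
      abs_of_nonneg (by linarith : (0:ℝ) ≤ t - s)]
    have := exp_lip0 (-s/2) (-t/2) (by linarith) (by linarith)
    linarith
  · have h1 : Real.exp (-s/2) ≤ Real.exp (-t/2) := Real.exp_le_exp.mpr (by linarith)
    rw [abs_of_nonneg (by linarith : (0:ℝ) ≤ Real.exp (-t/2) - Real.exp (-s/2)),
      abs_sub_comm t s, abs_of_nonneg (by linarith : (0:ℝ) ≤ s - t)]
    have := exp_lip0 (-t/2) (-s/2) (by linarith) (by linarith)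
    linarith

private lemma min_one_le_rpow (y ε : ℝ) (hy : 0 ≤ y) (hε : 0 ≤ ε) (hε1 : ε ≤ 1) :
    min 1 y ≤ y ^ ε := by
  rcases eq_or_lt_of_le hy with h | h
  · rw [← h]
    exact le_trans (min_le_right _ _) (Real.rpow_nonneg le_rfl ε)
  rcases le_total 1 y with h1 | h1
  · exact le_trans (min_le_left _ _) (Real.one_le_rpow h1 hε)
  · calc min 1 y ≤ y := min_le_right _ _
      _ = y ^ (1:ℝ) := (Real.rpow_one y).symm
      _ ≤ y ^ ε := Real.rpow_le_rpow_of_exponent_ge h h1 hε1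

private lemma interp (A l d ε x : ℝ) (hA : 0 ≤ A) (hl : 0 ≤ l) (hd : 0 ≤ d)
    (hε : 0 ≤ ε) (hε1 : ε ≤ 1) (h1 : |x| ≤ A) (h2 : |x| ≤ A * (l * d)) :
    |x| ≤ A * (l * d) ^ ε := by
  have hmin : |x| ≤ A * min 1 (l*d) := by
    rcases le_total 1 (l*d) with h | h
    · rw [min_eq_left h, mul_one]; exact h1
    · rw [min_eq_right h]; exact h2
  calc |x| ≤ A * min 1 (l*d) := hmin
    _ ≤ A * (l*d)^ε := by
        apply mul_le_mul_of_nonneg_left (min_one_le_rpow _ _ (by positivity) hε hε1) hA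

private lemma prod_sup (e1 e2 c1 c2 A : ℝ) (he1 : |e1| ≤ 1) (he2 : |e2| ≤ 1)
    (hc1 : |c1| ≤ A) (hc2 : |c2| ≤ A) : |e1*c1 - e2*c2| ≤ 2*A := by
  have hA : 0 ≤ A := le_trans (abs_nonneg _) hc1
  calc |e1*c1 - e2*c2| ≤ |e1*c1| + |e2*c2| := by
        rw [sub_eq_add_neg]
        exact (abs_add_le _ _).trans (by rw [abs_neg])
    _ = |e1| * |c1| + |e2| * |c2| := by rw [abs_mul, abs_mul]
    _ ≤ 1*A + 1*A := add_le_add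
        (mul_le_mul he1 hc1 (abs_nonneg _) zero_le_one)
        (mul_le_mul he2 hc2 (abs_nonneg _) zero_le_one)
    _ = 2*A := by ring

private lemma prod_lip (e1 e2 c1 c2 A D L : ℝ) (he2 : |e2| ≤ 1) (hc1 : |c1| ≤ A)
    (hde : |e1 - e2| ≤ D) (hdc : |c1 - c2| ≤ L) (hA : 0 ≤ A) (hD : 0 ≤ D) :
    |e1*c1 - e2*c2| ≤ D*A + L := by
  have key : e1*c1 - e2*c2 = (e1-e2)*c1 + e2*(c1-c2) := by ring
  calc |e1*c1 - e2*c2| ≤ |(e1-e2)*c1| + |e2*(c1-c2)| := by rw [key]; exact abs_add_le _ _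
    _ = |e1 - e2| * |c1| + |e2| * |c1 - c2| := by rw [abs_mul, abs_mul]
    _ ≤ D*A + 1*L := add_le_add
        (mul_le_mul hde hc1 (abs_nonneg _) hD)
        (mul_le_mul he2 hdc (abs_nonneg _) zero_le_one)
    _ = D*A + L := by ring

/-- the master entry estimate -/
private lemma entry_est (l ε s t A c1 c2 : ℝ) (hl : 1/2 ≤ l) (hε : 0 ≤ ε) (hε1 : ε ≤ 1)
    (hs : 0 ≤ s) (ht : 0 ≤ t) (hA : 0 ≤ A)
    (hc1 : |c1| ≤ A) (hc2 : |c2| ≤ A) (hlip : |c1 - c2| ≤ A * (l * |t - s|)) :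
    |Real.exp (-t/2) * c1 - Real.exp (-s/2) * c2| ≤ (2*A) * (l * |t - s|) ^ ε := by
  have hl0 : (0:ℝ) < l := by linarith
  have hd : (0:ℝ) ≤ |t - s| := abs_nonneg _
  have he1 : |Real.exp (-t/2)| ≤ 1 := by
    rw [abs_of_pos (Real.exp_pos _)]; exact Real.exp_le_one_iff.mpr (by linarith)
  have he2 : |Real.exp (-s/2)| ≤ 1 := by
    rw [abs_of_pos (Real.exp_pos _)]; exact Real.exp_le_one_iff.mpr (by linarith)
  apply interp _ _ _ _ _ (by positivity) hl0.le hd hε hε1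
  · exact prod_sup _ _ _ _ _ he1 he2 hc1 hc2
  · have hde := exp_lip s t hs ht
    have := prod_lip (Real.exp (-t/2)) (Real.exp (-s/2)) c1 c2 A (|t-s|/2)
      (A * (l * |t - s|)) he2 hc1 hde hlip hA (by positivity)
    calc |Real.exp (-t/2) * c1 - Real.exp (-s/2) * c2|
        ≤ (|t-s|/2)*A + A * (l * |t - s|) := this
      _ ≤ (2*A) * (l * |t - s|) := by nlinarith [mul_nonneg hA hd]
private lemma abs_sub'' (x y : ℝ) : |x - y| ≤ |x| + |y| := by
  rw [sub_eq_add_neg]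
  exact (abs_add_le _ _).trans (by rw [abs_neg])

private lemma nsq_nonneg (n : Fin 3 → ℤ) : 0 ≤ nsq n :=
  Finset.sum_nonneg fun i _ => sq_nonneg _

private lemma jap_one_le (n : Fin 3 → ℤ) : 1 ≤ jap n := by
  rw [jap]
  calc (1:ℝ) = Real.sqrt 1 := Real.sqrt_one.symm
    _ ≤ Real.sqrt (1 + nsq n) := Real.sqrt_le_sqrt (by linarith [nsq_nonneg n])

private lemma jap_pos (n : Fin 3 → ℤ) : 0 < jap n := lt_of_lt_of_le one_pos (jap_one_le n)

private lemma jap_rpow_two (n : Fin 3 → ℤ) : jap n ^ (2:ℝ) = 1 + nsq n := by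
  rw [jap, show (2:ℝ) = ((2:ℕ):ℝ) by norm_num, Real.rpow_natCast,
    Real.sq_sqrt (by linarith [nsq_nonneg n])]

private lemma lam_half (n : Fin 3 → ℤ) : 1/2 ≤ lam n := by
  rw [lam]
  calc (1/2:ℝ) = Real.sqrt ((1/2)^2) := (Real.sqrt_sq (by norm_num)).symm
    _ ≤ Real.sqrt (3/4 + nsq n ^ 2) := Real.sqrt_le_sqrt (by nlinarith [sq_nonneg (nsq n)])

private lemma lam_le (n : Fin 3 → ℤ) : lam n ≤ jap n ^ (2:ℝ) := by
  rw [jap_rpow_two, lam]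
  have h := nsq_nonneg n
  calc Real.sqrt (3/4 + nsq n ^ 2) ≤ Real.sqrt ((1 + nsq n)^2) :=
      Real.sqrt_le_sqrt (by nlinarith)
    _ = 1 + nsq n := Real.sqrt_sq (by linarith)

private lemma jap_sq_le (n : Fin 3 → ℤ) : jap n ^ (2:ℝ) ≤ 2 * lam n := by
  rw [jap_rpow_two, lam]
  have h := nsq_nonneg n
  have h2 : Real.sqrt (3/4 + nsq n ^ 2) ^ 2 = 3/4 + nsq n ^ 2 :=
    Real.sq_sqrt (by nlinarith)
  nlinarith [Real.sqrt_nonneg (3/4 + nsq n ^ 2), sq_nonneg (nsq n - 1),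
    sq_nonneg (2 * Real.sqrt (3/4 + nsq n ^ 2) - (1 + nsq n))]

-- coefficient sup bounds
private lemma c11_sup (l a : ℝ) (hl : 1/2 ≤ l) : |Real.cos a + Real.sin a / (2*l)| ≤ 2 := by
  have h2l : (0:ℝ) < 2*l := by linarith
  have key : |Real.sin a / (2*l)| ≤ 1 := by
    rw [abs_div, abs_of_pos h2l, div_le_one h2l]
    linarith [Real.abs_sin_le_one a]
  calc |Real.cos a + Real.sin a / (2*l)| ≤ |Real.cos a| + |Real.sin a / (2*l)| := abs_add_le _ _
    _ ≤ 1 + 1 := add_le_add (Real.abs_cos_le_one a) key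
    _ = 2 := by norm_num

private lemma c22_sup (l a : ℝ) (hl : 1/2 ≤ l) : |Real.cos a - Real.sin a / (2*l)| ≤ 2 := by
  have h2l : (0:ℝ) < 2*l := by linarith
  have key : |Real.sin a / (2*l)| ≤ 1 := by
    rw [abs_div, abs_of_pos h2l, div_le_one h2l]
    linarith [Real.abs_sin_le_one a]
  calc |Real.cos a - Real.sin a / (2*l)| ≤ |Real.cos a| + |Real.sin a / (2*l)| :=
      abs_sub'' _ _
    _ ≤ 1 + 1 := add_le_add (Real.abs_cos_le_one a) key
    _ = 2 := by norm_num

private lemma c12_sup (l a : ℝ) (hl : 1/2 ≤ l) : |Real.sin a / l| ≤ 1/l := by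
  have hl0 : (0:ℝ) < l := by linarith
  rw [abs_div, abs_of_pos hl0]
  exact (div_le_div_iff_of_pos_right hl0).mpr (Real.abs_sin_le_one a)

private lemma c21_sup (l a : ℝ) (hl : 1/2 ≤ l) : |-((l - 1/(4*l)) * Real.sin a)| ≤ l := by
  have hl0 : (0:ℝ) < l := by linarith
  have hm : 0 ≤ l - 1/(4*l) := by
    rw [sub_nonneg, div_le_iff₀ (by linarith : (0:ℝ) < 4*l)]
    nlinarith
  rw [abs_neg, abs_mul, abs_of_nonneg hm]
  calc (l - 1/(4*l)) * |Real.sin a| ≤ l * 1 :=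
      mul_le_mul (by linarith [one_div_nonneg.mpr (by linarith : (0:ℝ) ≤ 4*l)])
        (Real.abs_sin_le_one a) (abs_nonneg _) hl0.le
    _ = l := mul_one l

-- coefficient Lipschitz bounds (in the angle variables)
private lemma c11_lip (l a b : ℝ) (hl : 1/2 ≤ l) :
    |(Real.cos a + Real.sin a / (2*l)) - (Real.cos b + Real.sin b / (2*l))| ≤ 2 * |a - b| := by
  have h2l : (0:ℝ) < 2*l := by linarith
  have key : |Real.sin a / (2*l) - Real.sin b / (2*l)| ≤ |a - b| := by
    rw [div_sub_div_same, abs_div, abs_of_pos h2l, div_le_iff₀ h2l]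
    calc |Real.sin a - Real.sin b| ≤ |a - b| := sin_lip' a b
      _ ≤ |a - b| * (2*l) := by nlinarith [abs_nonneg (a-b)]
  have e : (Real.cos a + Real.sin a / (2*l)) - (Real.cos b + Real.sin b / (2*l))
      = (Real.cos a - Real.cos b) + (Real.sin a / (2*l) - Real.sin b / (2*l)) := by ring
  rw [e]
  calc |(Real.cos a - Real.cos b) + (Real.sin a / (2*l) - Real.sin b / (2*l))|
      ≤ |Real.cos a - Real.cos b| + |Real.sin a / (2*l) - Real.sin b / (2*l)| := abs_add_le _ _
    _ ≤ |a - b| + |a - b| := add_le_add (cos_lip' a b) key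
    _ = 2 * |a - b| := by ring

private lemma c22_lip (l a b : ℝ) (hl : 1/2 ≤ l) :
    |(Real.cos a - Real.sin a / (2*l)) - (Real.cos b - Real.sin b / (2*l))| ≤ 2 * |a - b| := by
  have h2l : (0:ℝ) < 2*l := by linarith
  have key : |Real.sin a / (2*l) - Real.sin b / (2*l)| ≤ |a - b| := by
    rw [div_sub_div_same, abs_div, abs_of_pos h2l, div_le_iff₀ h2l]
    calc |Real.sin a - Real.sin b| ≤ |a - b| := sin_lip' a b
      _ ≤ |a - b| * (2*l) := by nlinarith [abs_nonneg (a-b)]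
  have e : (Real.cos a - Real.sin a / (2*l)) - (Real.cos b - Real.sin b / (2*l))
      = (Real.cos a - Real.cos b) - (Real.sin a / (2*l) - Real.sin b / (2*l)) := by ring
  rw [e]
  calc |(Real.cos a - Real.cos b) - (Real.sin a / (2*l) - Real.sin b / (2*l))|
      ≤ |Real.cos a - Real.cos b| + |Real.sin a / (2*l) - Real.sin b / (2*l)| := abs_sub'' _ _
    _ ≤ |a - b| + |a - b| := add_le_add (cos_lip' a b) key
    _ = 2 * |a - b| := by ring

private lemma c12_lip (l a b : ℝ) (hl : 1/2 ≤ l) :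
    |Real.sin a / l - Real.sin b / l| ≤ (1/l) * |a - b| := by
  have hl0 : (0:ℝ) < l := by linarith
  rw [div_sub_div_same, abs_div, abs_of_pos hl0, div_le_iff₀ hl0]
  calc |Real.sin a - Real.sin b| ≤ |a - b| := sin_lip' a b
    _ = 1/l * |a - b| * l := by field_simp

private lemma c21_lip (l a b : ℝ) (hl : 1/2 ≤ l) :
    |(-((l - 1/(4*l)) * Real.sin a)) - (-((l - 1/(4*l)) * Real.sin b))| ≤ l * |a - b| := by
  have hl0 : (0:ℝ) < l := by linarith
  have hm : 0 ≤ l - 1/(4*l) := by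
    rw [sub_nonneg, div_le_iff₀ (by linarith : (0:ℝ) < 4*l)]
    nlinarith
  have e : (-((l - 1/(4*l)) * Real.sin a)) - (-((l - 1/(4*l)) * Real.sin b))
      = (l - 1/(4*l)) * (Real.sin b - Real.sin a) := by ring
  rw [e, abs_mul, abs_of_nonneg hm]
  have h1 : |Real.sin b - Real.sin a| ≤ |a - b| := by
    rw [abs_sub_comm a b]
    exact sin_lip' b a
  apply mul_le_mul _ h1 (abs_nonneg _) hl0.le
  linarith [one_div_nonneg.mpr (by linarith : (0:ℝ) ≤ 4*l)]

private lemma two_sq' (p q : ℝ) : (p+q)^2 ≤ 2*(p^2+q^2) := by nlinarith [sq_nonneg (p-q)]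

private lemma Vkey (l J ε : ℝ) (hl0 : 0 < l) (hJ : 1 ≤ J) (hJ0 : 0 < J)
    (hJl : J^(2:ℝ) ≤ 2*l) (hlε : l^ε ≤ J^(2*ε)) (hε : 0 ≤ ε) :
    2*(1/l)*l^ε ≤ 4*J^(4*ε-2) := by
  have h1 : 1/l ≤ 2/J^(2:ℝ) := by
    rw [div_le_div_iff₀ hl0 (by positivity)]
    linarith
  calc 2*(1/l)*l^ε ≤ 2*(2/J^(2:ℝ))*J^(2*ε) := by
        apply mul_le_mul _ hlε (Real.rpow_nonneg hl0.le ε) (by positivity)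
        linarith
    _ = 4*(J^(2*ε)/J^(2:ℝ)) := by ring
    _ = 4*J^(2*ε-2) := by rw [Real.rpow_sub hJ0]
    _ ≤ 4*J^(4*ε-2) := by
        have := Real.rpow_le_rpow_of_exponent_le hJ (show 2*ε-2 ≤ 4*ε-2 by linarith)
        linarith

private lemma Wkey (l J ε : ℝ) (hl0 : 0 < l) (hJ : 1 ≤ J) (hJ0 : 0 < J)
    (hlJ : l ≤ J^(2:ℝ)) (hlε : l^ε ≤ J^(2*ε)) (hε : 0 ≤ ε) :
    2*l*l^ε ≤ 4*J^(4*ε+2) := by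
  calc 2*l*l^ε ≤ 2*(J^(2:ℝ))*J^(2*ε) := by
        apply mul_le_mul _ hlε (Real.rpow_nonneg hl0.le ε) (by positivity)
        linarith
    _ = 2*(J^(2:ℝ)*J^(2*ε)) := by ring
    _ = 2*J^(2+2*ε) := by rw [← Real.rpow_add hJ0]
    _ ≤ 4*J^(4*ε+2) := by
        have h1 := Real.rpow_le_rpow_of_exponent_le hJ (show 2+2*ε ≤ 4*ε+2 by linarith)
        have h2 : (0:ℝ) ≤ J^(2+2*ε) := Real.rpow_nonneg hJ0.le _
        linarith

set_option maxHeartbeats 2000000 in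
private lemma pointwise (σ ε : ℝ) (hε : 0 ≤ ε) (hε1 : ε ≤ 1) (s t : ℝ)
    (hs : 0 ≤ s) (ht : 0 ≤ t) (u : (Fin 3 → ℤ) → ℂ × ℂ) (n : Fin 3 → ℤ) :
    jap n ^ (2*σ) * ‖((Sprop t u - Sprop s u) n).1‖^2
      + jap n ^ (2*σ-4) * ‖((Sprop t u - Sprop s u) n).2‖^2
    ≤ 64 * (|t-s|^ε)^2 * (jap n ^ (2*(σ+4*ε)) * ‖(u n).1‖^2
      + jap n ^ (2*(σ+4*ε)-4) * ‖(u n).2‖^2) := by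
  have hl : 1/2 ≤ lam n := lam_half n
  have hl0 : (0:ℝ) < lam n := by linarith
  have hJ : 1 ≤ jap n := jap_one_le n
  have hJ0 : (0:ℝ) < jap n := jap_pos n
  have hlJ : lam n ≤ jap n ^ (2:ℝ) := lam_le n
  have hJl : jap n ^ (2:ℝ) ≤ 2 * lam n := jap_sq_le n
  set l : ℝ := lam n with hldef
  set J : ℝ := jap n with hJdef
  set d : ℝ := |t - s| with hddef
  have hd : (0:ℝ) ≤ d := abs_nonneg _
  have hdε : (0:ℝ) ≤ d^ε := Real.rpow_nonneg hd ε
  have hang : |t*l - s*l| = l * d := by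
    rw [← sub_mul, abs_mul, abs_of_pos hl0, mul_comm]
  have hld : (l*d)^ε = l^ε * d^ε := Real.mul_rpow hl0.le hd
  have hlε : l^ε ≤ J^(2*ε) := by
    calc l^ε ≤ (J^(2:ℝ))^ε := Real.rpow_le_rpow hl0.le hlJ hε
      _ = J^((2:ℝ)*ε) := (Real.rpow_mul hJ0.le 2 ε).symm
  set U : ℝ := J^(4*ε) with hUdef
  set V : ℝ := J^(4*ε-2) with hVdef
  set W : ℝ := J^(4*ε+2) with hWdef
  have hU0 : (0:ℝ) ≤ U := Real.rpow_nonneg hJ0.le _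
  have hV0 : (0:ℝ) ≤ V := Real.rpow_nonneg hJ0.le _
  have hW0 : (0:ℝ) ≤ W := Real.rpow_nonneg hJ0.le _
  -- entry estimates
  have B11 : |Real.exp (-t/2) * (Real.cos (t*l) + Real.sin (t*l)/(2*l))
      - Real.exp (-s/2) * (Real.cos (s*l) + Real.sin (s*l)/(2*l))| ≤ 4*(U*d^ε) := by
    have h := entry_est l ε s t 2 _ _ hl hε hε1 hs ht (by norm_num)
      (c11_sup l (t*l) hl) (c11_sup l (s*l) hl)
      (by rw [show (2:ℝ)*(l*d) = 2*|t*l - s*l| by rw [hang]]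
          exact c11_lip l (t*l) (s*l) hl)
    calc _ ≤ (2*2)*(l*d)^ε := h
      _ = 4*(l^ε * d^ε) := by rw [hld]; ring
      _ ≤ 4*(U*d^ε) := by
          have h1 : l^ε ≤ U := hlε.trans (Real.rpow_le_rpow_of_exponent_le hJ (by linarith))
          exact mul_le_mul_of_nonneg_left (mul_le_mul_of_nonneg_right h1 hdε) (by norm_num)
  have B22 : |Real.exp (-t/2) * (Real.cos (t*l) - Real.sin (t*l)/(2*l))
      - Real.exp (-s/2) * (Real.cos (s*l) - Real.sin (s*l)/(2*l))| ≤ 4*(U*d^ε) := by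
    have h := entry_est l ε s t 2 _ _ hl hε hε1 hs ht (by norm_num)
      (c22_sup l (t*l) hl) (c22_sup l (s*l) hl)
      (by rw [show (2:ℝ)*(l*d) = 2*|t*l - s*l| by rw [hang]]
          exact c22_lip l (t*l) (s*l) hl)
    calc _ ≤ (2*2)*(l*d)^ε := h
      _ = 4*(l^ε * d^ε) := by rw [hld]; ring
      _ ≤ 4*(U*d^ε) := by
          have h1 : l^ε ≤ U := hlε.trans (Real.rpow_le_rpow_of_exponent_le hJ (by linarith))
          exact mul_le_mul_of_nonneg_left (mul_le_mul_of_nonneg_right h1 hdε) (by norm_num)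
  have B12 : |Real.exp (-t/2) * (Real.sin (t*l)/l)
      - Real.exp (-s/2) * (Real.sin (s*l)/l)| ≤ 4*(V*d^ε) := by
    have h := entry_est l ε s t (1/l) _ _ hl hε hε1 hs ht (by positivity)
      (c12_sup l (t*l) hl) (c12_sup l (s*l) hl)
      (by rw [show (1/l)*(l*d) = (1/l)*|t*l - s*l| by rw [hang]]
          exact c12_lip l (t*l) (s*l) hl)
    have hVkey : 2*(1/l)*l^ε ≤ 4*V := Vkey l J ε hl0 hJ hJ0 hJl hlε hε
    calc _ ≤ (2*(1/l))*(l*d)^ε := h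
      _ = (2*(1/l)*l^ε)*d^ε := by rw [hld]; ring
      _ ≤ (4*V)*d^ε := mul_le_mul_of_nonneg_right hVkey hdε
      _ = 4*(V*d^ε) := by ring
  have B21 : |Real.exp (-t/2) * (-((l - 1/(4*l)) * Real.sin (t*l)))
      - Real.exp (-s/2) * (-((l - 1/(4*l)) * Real.sin (s*l)))| ≤ 4*(W*d^ε) := by
    have h := entry_est l ε s t l _ _ hl hε hε1 hs ht hl0.le
      (c21_sup l (t*l) hl) (c21_sup l (s*l) hl)
      (by rw [show l*(l*d) = l*|t*l - s*l| by rw [hang]]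
          exact c21_lip l (t*l) (s*l) hl)
    have hWkey : 2*l*l^ε ≤ 4*W := Wkey l J ε hl0 hJ hJ0 hlJ hlε hε
    calc _ ≤ (2*l)*(l*d)^ε := h
      _ = (2*l*l^ε)*d^ε := by rw [hld]; ring
      _ ≤ (4*W)*d^ε := mul_le_mul_of_nonneg_right hWkey hdε
      _ = 4*(W*d^ε) := by ring
  -- components of the difference
  set X : ℝ := ‖(u n).1‖ with hXdef
  set Y : ℝ := ‖(u n).2‖ with hYdef
  have hX0 : 0 ≤ X := norm_nonneg _
  have hY0 : 0 ≤ Y := norm_nonneg _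
  have hΔ1 : ((Sprop t u - Sprop s u) n).1
      = ((Real.exp (-t/2) * (Real.cos (t*l) + Real.sin (t*l)/(2*l))
          - Real.exp (-s/2) * (Real.cos (s*l) + Real.sin (s*l)/(2*l)) : ℝ) : ℂ) * (u n).1
        + ((Real.exp (-t/2) * (Real.sin (t*l)/l)
          - Real.exp (-s/2) * (Real.sin (s*l)/l) : ℝ) : ℂ) * (u n).2 := by
    simp only [Pi.sub_apply, Sprop, Mmat, Prod.smul_mk, smul_eq_mul, Prod.mk_sub_mk]
    push_cast
    ring
  have hΔ2 : ((Sprop t u - Sprop s u) n).2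
      = ((Real.exp (-t/2) * (-((l - 1/(4*l)) * Real.sin (t*l)))
          - Real.exp (-s/2) * (-((l - 1/(4*l)) * Real.sin (s*l))) : ℝ) : ℂ) * (u n).1
        + ((Real.exp (-t/2) * (Real.cos (t*l) - Real.sin (t*l)/(2*l))
          - Real.exp (-s/2) * (Real.cos (s*l) - Real.sin (s*l)/(2*l)) : ℝ) : ℂ) * (u n).2 := by
    simp only [Pi.sub_apply, Sprop, Mmat, Prod.smul_mk, smul_eq_mul, Prod.mk_sub_mk]
    push_cast
    ring
  have N1 : ‖((Sprop t u - Sprop s u) n).1‖ ≤ 4*(U*d^ε)*X + 4*(V*d^ε)*Y := by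
    rw [hΔ1]
    refine (norm_add_le _ _).trans ?_
    rw [norm_mul, norm_mul, Complex.norm_real, Complex.norm_real,
      Real.norm_eq_abs, Real.norm_eq_abs]
    exact add_le_add (mul_le_mul_of_nonneg_right B11 hX0)
      (mul_le_mul_of_nonneg_right B12 hY0)
  have N2 : ‖((Sprop t u - Sprop s u) n).2‖ ≤ 4*(W*d^ε)*X + 4*(U*d^ε)*Y := by
    rw [hΔ2]
    refine (norm_add_le _ _).trans ?_
    rw [norm_mul, norm_mul, Complex.norm_real, Complex.norm_real,
      Real.norm_eq_abs, Real.norm_eq_abs]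
    exact add_le_add (mul_le_mul_of_nonneg_right B21 hX0)
      (mul_le_mul_of_nonneg_right B22 hY0)
  have hq1 : ‖((Sprop t u - Sprop s u) n).1‖^2 ≤ (4*(U*d^ε)*X + 4*(V*d^ε)*Y)^2 :=
    pow_le_pow_left₀ (norm_nonneg _) N1 2
  have hq2 : ‖((Sprop t u - Sprop s u) n).2‖^2 ≤ (4*(W*d^ε)*X + 4*(U*d^ε)*Y)^2 :=
    pow_le_pow_left₀ (norm_nonneg _) N2 2
  have e1 : J^(2*σ)*(U*U) = J^(2*(σ+4*ε)) := by
    rw [hUdef, ← Real.rpow_add hJ0 (4*ε) (4*ε), ← Real.rpow_add hJ0 (2*σ) (4*ε+4*ε)]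
    congr 1
    ring
  have e2 : J^(2*σ)*(V*V) = J^(2*(σ+4*ε)-4) := by
    rw [hVdef, ← Real.rpow_add hJ0 (4*ε-2) (4*ε-2), ← Real.rpow_add hJ0 (2*σ) (4*ε-2+(4*ε-2))]
    congr 1
    ring
  have e3 : J^(2*σ-4)*(W*W) = J^(2*(σ+4*ε)) := by
    rw [hWdef, ← Real.rpow_add hJ0 (4*ε+2) (4*ε+2), ← Real.rpow_add hJ0 (2*σ-4) (4*ε+2+(4*ε+2))]
    congr 1
    ring
  have e4 : J^(2*σ-4)*(U*U) = J^(2*(σ+4*ε)-4) := by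
    rw [hUdef, ← Real.rpow_add hJ0 (4*ε) (4*ε), ← Real.rpow_add hJ0 (2*σ-4) (4*ε+4*ε)]
    congr 1
    ring
  have hJσ : (0:ℝ) ≤ J^(2*σ) := Real.rpow_nonneg hJ0.le _
  have hJσ4 : (0:ℝ) ≤ J^(2*σ-4) := Real.rpow_nonneg hJ0.le _
  calc jap n ^ (2*σ) * ‖((Sprop t u - Sprop s u) n).1‖^2
        + jap n ^ (2*σ-4) * ‖((Sprop t u - Sprop s u) n).2‖^2
      ≤ J^(2*σ) * (4*(U*d^ε)*X + 4*(V*d^ε)*Y)^2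
        + J^(2*σ-4) * (4*(W*d^ε)*X + 4*(U*d^ε)*Y)^2 :=
      add_le_add (mul_le_mul_of_nonneg_left hq1 hJσ) (mul_le_mul_of_nonneg_left hq2 hJσ4)
    _ = J^(2*σ) * (16*(d^ε)^2*(U*X+V*Y)^2) + J^(2*σ-4) * (16*(d^ε)^2*(W*X+U*Y)^2) := by
        ring
    _ ≤ J^(2*σ) * (16*(d^ε)^2*(2*((U*X)^2+(V*Y)^2)))
        + J^(2*σ-4) * (16*(d^ε)^2*(2*((W*X)^2+(U*Y)^2))) := by
        apply add_le_add
        · apply mul_le_mul_of_nonneg_left _ hJσ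
          apply mul_le_mul_of_nonneg_left (two_sq' _ _) (by positivity)
        · apply mul_le_mul_of_nonneg_left _ hJσ4
          apply mul_le_mul_of_nonneg_left (two_sq' _ _) (by positivity)
    _ = 32*(d^ε)^2*((J^(2*σ)*(U*U) + J^(2*σ-4)*(W*W))*X^2
        + (J^(2*σ)*(V*V) + J^(2*σ-4)*(U*U))*Y^2) := by ring
    _ = 32*(d^ε)^2*((J^(2*(σ+4*ε)) + J^(2*(σ+4*ε)))*X^2
        + (J^(2*(σ+4*ε)-4) + J^(2*(σ+4*ε)-4))*Y^2) := by rw [e1, e2, e3, e4]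
    _ = 64*(d^ε)^2*(J^(2*(σ+4*ε))*X^2 + J^(2*(σ+4*ε)-4)*Y^2) := by ring

/-- `‖S(t)(a,b) − S(s)(a,b)‖_{𝓗^σ} ≤ C |t−s|^ε ‖(a,b)‖_{𝓗^{σ+4ε}}`. -/
theorem propagator_time_regularity :
    ∀ σ : ℝ, ∀ ε : ℝ, 0 ≤ ε → ε ≤ 1 → ∃ C : ℝ, 0 < C ∧
      ∀ s t : ℝ, 0 ≤ s → 0 ≤ t → ∀ u : (Fin 3 → ℤ) → ℂ × ℂ,
        sobNorm σ (Sprop t u - Sprop s u) ≤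
          ENNReal.ofReal (C * |t - s| ^ ε) * sobNorm (σ + 4 * ε) u := by
  intro σ ε hε hε1
  refine ⟨8, by norm_num, ?_⟩
  intro s t hs ht u
  have key : sobNormSq σ (Sprop t u - Sprop s u)
      ≤ ENNReal.ofReal (64*(|t-s|^ε)^2) * sobNormSq (σ+4*ε) u := by
    rw [sobNormSq, sobNormSq, ← ENNReal.tsum_mul_left]
    apply ENNReal.tsum_le_tsum
    intro n
    rw [← ENNReal.ofReal_mul (by positivity)]
    exact ENNReal.ofReal_le_ofReal (pointwise σ ε hε hε1 s t hs ht u n)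
  have h2 : sobNorm σ (Sprop t u - Sprop s u)
      ≤ (ENNReal.ofReal (64*(|t-s|^ε)^2) * sobNormSq (σ+4*ε) u) ^ (1/2:ℝ) := by
    rw [sobNorm]
    exact ENNReal.rpow_le_rpow key (by norm_num)
  rw [ENNReal.mul_rpow_of_nonneg _ _ (by norm_num),
    ENNReal.ofReal_rpow_of_nonneg (by positivity) (by norm_num)] at h2
  have h3 : (64*(|t-s|^ε)^2 : ℝ)^((1:ℝ)/2) = 8*|t-s|^ε := by
    rw [show (64*(|t-s|^ε)^2 : ℝ) = (8*|t-s|^ε)^2 by ring, ← Real.sqrt_eq_rpow,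
      Real.sqrt_sq (by positivity)]
  rw [h3] at h2
  exact h2

end
end

section
/- For every t > 0 there exists ε > 0 such that for every n ∈ ℤ³, writing λ = λ_n = (3/4+|n|⁴)^{1/2}, and for every (x,y) ∈ ℝ², one has ∫₀ᵗ ( sin(sλ) x + (cos(sλ) − sin(sλ)/(2λ)) y )² ds ≥ ε (x² + y²). -/
set_option maxHeartbeats 1000000

noncomputable section

lemma cubic_sin_bound {v : ℝ} (h0 : 0 ≤ v) (h3 : v ≤ 3) : v ^ 3 / 16 ≤ v - Real.sin v := by
  set f : ℝ → ℝ := fun u => u - Real.sin u - u ^ 3 / 16 with hf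
  have hder : ∀ u : ℝ, HasDerivAt f (1 - Real.cos u - 3 * u ^ 2 / 16) u := by
    intro u
    have h := ((hasDerivAt_id u).sub (Real.hasDerivAt_sin u)).sub
      ((hasDerivAt_pow 3 u).div_const 16)
    exact h.congr_deriv (by norm_num)
  have hmono : MonotoneOn f (Set.Icc (0:ℝ) 3) := by
    apply monotoneOn_of_deriv_nonneg (convex_Icc 0 3)
    · exact (Continuous.continuousOn (by fun_prop))
    · intro u hu
      exact (hder u).differentiableAt.differentiableWithinAt
    · intro u hu
      rw [interior_Icc] at hu
      rw [(hder u).deriv]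
      have hupi : |u| ≤ Real.pi := by
        rw [abs_of_nonneg hu.1.le]
        nlinarith [Real.pi_gt_three, hu.2]
      have hcos := Real.cos_le_one_sub_mul_cos_sq hupi
      have h2 : (3:ℝ)/16 ≤ 2 / Real.pi ^ 2 := by
        rw [div_le_div_iff₀ (by norm_num) (by positivity)]
        nlinarith [Real.pi_lt_d2, Real.pi_pos]
      have h3' := mul_le_mul_of_nonneg_right h2 (sq_nonneg u)
      linarith
  have := hmono (Set.mem_Icc.mpr ⟨le_refl 0, by norm_num⟩) (Set.mem_Icc.mpr ⟨h0, h3⟩) h0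
  simp [hf] at this
  linarith

/-- uniform coercivity of the quadratic forms
`B_n(x,y) = ∫₀ᵗ (sin(sλ_n)x + (cos(sλ_n) − sin(sλ_n)/(2λ_n))y)² ds ≥ ε(x²+y²)`. -/
theorem quadratic_forms_uniformly_coercive :
    ∀ t : ℝ, 0 < t → ∃ ε : ℝ, 0 < ε ∧ ∀ n : Fin 3 → ℤ, ∀ x y : ℝ,
      ε * (x ^ 2 + y ^ 2) ≤
        ∫ s in (0 : ℝ)..t,
          (Real.sin (s * lam n) * x +
            (Real.cos (s * lam n) - Real.sin (s * lam n) / (2 * lam n)) * y) ^ 2 := by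
  intro t ht
  have hδpos : 0 < min (3 * t ^ 3 / 128) (t / 3) := lt_min (by positivity) (by positivity)
  set δ : ℝ := min (3 * t ^ 3 / 128) (t / 3) with hδ
  refine ⟨3 / 7 * δ, by linarith, ?_⟩
  intro n x y
  have hL2 : (lam n) ^ 2 = 3 / 4 + (nsq n) ^ 2 := Real.sq_sqrt (by positivity)
  have hL2' : 3 / 4 ≤ (lam n) ^ 2 := by nlinarith [sq_nonneg (nsq n)]
  have hL : 0 < lam n := Real.sqrt_pos.mpr (by positivity)
  set L : ℝ := lam n with hLdef
  set a : ℝ := x - y / (2 * L) with ha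
  -- the antiderivative
  set F : ℝ → ℝ := fun s => (a ^ 2 + y ^ 2) / 2 * s +
    1 / (2 * L) * (Real.sin (s * L) *
      ((y ^ 2 - a ^ 2) * Real.cos (s * L) + 2 * a * y * Real.sin (s * L))) with hF
  have hderiv : ∀ s : ℝ, HasDerivAt F
      ((Real.sin (s * L) * x +
        (Real.cos (s * L) - Real.sin (s * L) / (2 * L)) * y) ^ 2) s := by
    intro s
    have h1 : HasDerivAt (fun s : ℝ => s * L) L s := by
      simpa using (hasDerivAt_id s).mul_const L
    have hs : HasDerivAt (fun s : ℝ => Real.sin (s * L)) (Real.cos (s * L) * L) s :=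
      h1.sin
    have hc : HasDerivAt (fun s : ℝ => Real.cos (s * L)) (-Real.sin (s * L) * L) s :=
      h1.cos
    have hlin : HasDerivAt (fun s : ℝ => (a ^ 2 + y ^ 2) / 2 * s) ((a ^ 2 + y ^ 2) / 2) s := by
      simpa using (hasDerivAt_id s).const_mul ((a ^ 2 + y ^ 2) / 2)
    have hinner : HasDerivAt
        (fun s : ℝ => Real.sin (s * L) *
          ((y ^ 2 - a ^ 2) * Real.cos (s * L) + 2 * a * y * Real.sin (s * L)))
        (L * ((y ^ 2 - a ^ 2) * (Real.cos (s * L) ^ 2 - Real.sin (s * L) ^ 2) +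
          4 * a * y * (Real.sin (s * L) * Real.cos (s * L)))) s := by
      have h := hs.mul (((hc.const_mul (y ^ 2 - a ^ 2))).add (hs.const_mul (2 * a * y)))
      exact h.congr_deriv (by simp only [Pi.add_apply]; ring)
    have h := hlin.add (hinner.const_mul (1 / (2 * L)))
    refine h.congr_deriv ?_
    symm
    have hpy : Real.sin (s * L) ^ 2 + Real.cos (s * L) ^ 2 = 1 := Real.sin_sq_add_cos_sq _
    have hsimp : (1 : ℝ) / (2 * L) * (L * ((y ^ 2 - a ^ 2) *
        (Real.cos (s * L) ^ 2 - Real.sin (s * L) ^ 2) +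
          4 * a * y * (Real.sin (s * L) * Real.cos (s * L)))) =
        ((y ^ 2 - a ^ 2) * (Real.cos (s * L) ^ 2 - Real.sin (s * L) ^ 2) +
          4 * a * y * (Real.sin (s * L) * Real.cos (s * L))) / 2 := by
      field_simp
    rw [hsimp, show Real.sin (s * L) * x +
        (Real.cos (s * L) - Real.sin (s * L) / (2 * L)) * y =
        a * Real.sin (s * L) + y * Real.cos (s * L) by rw [ha]; ring]
    linear_combination ((a ^ 2 + y ^ 2) / 2) * hpy
  have hcont : Continuous (fun s : ℝ => (Real.sin (s * L) * x +
      (Real.cos (s * L) - Real.sin (s * L) / (2 * L)) * y) ^ 2) := by fun_prop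
  have hval : (∫ s in (0:ℝ)..t,
      (Real.sin (s * L) * x +
        (Real.cos (s * L) - Real.sin (s * L) / (2 * L)) * y) ^ 2) = F t - F 0 :=
    intervalIntegral.integral_eq_sub_of_hasDerivAt (fun s _ => hderiv s)
      (hcont.intervalIntegrable 0 t)
  have hF0 : F 0 = 0 := by simp [hF]
  set S := Real.sin (t * L) with hS
  set C := Real.cos (t * L) with hC
  -- bound the oscillatory term
  have hQ2 : ((y ^ 2 - a ^ 2) * C + 2 * a * y * S) ^ 2 ≤ (a ^ 2 + y ^ 2) ^ 2 := by
    nlinarith [sq_nonneg ((y ^ 2 - a ^ 2) * S - 2 * a * y * C), Real.sin_sq_add_cos_sq (t * L)]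
  have hK : -(|S| * (a ^ 2 + y ^ 2)) ≤ S * ((y ^ 2 - a ^ 2) * C + 2 * a * y * S) := by
    have hQ : |(y ^ 2 - a ^ 2) * C + 2 * a * y * S| ≤ a ^ 2 + y ^ 2 :=
      abs_le_of_sq_le_sq hQ2 (by positivity)
    calc -(|S| * (a ^ 2 + y ^ 2)) ≤ -|S * ((y ^ 2 - a ^ 2) * C + 2 * a * y * S)| := by
          rw [abs_mul]
          nlinarith [abs_nonneg S, hQ]
      _ ≤ _ := neg_abs_le _
  -- uniform lower bound on t/2 - |S|/(2L)
  have hstep : δ ≤ t / 2 - |S| / (2 * L) := by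
    rcases le_or_gt (t * L) 3 with hcase | hcase
    · have hv0 : 0 ≤ t * L := by positivity
      have hsin_nonneg : 0 ≤ S := by
        rw [hS]
        exact Real.sin_nonneg_of_nonneg_of_le_pi hv0 (by nlinarith [Real.pi_gt_three])
      have hcub := cubic_sin_bound hv0 hcase
      have habs : |S| = S := abs_of_nonneg hsin_nonneg
      have h1 : 3 * t ^ 3 / 128 ≤ t / 2 - S / (2 * L) := by
        rw [div_sub_div _ _ (two_ne_zero) (by positivity : (2 : ℝ) * L ≠ 0),
          div_le_div_iff₀ (by norm_num) (by positivity)]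
        rw [hS]
        nlinarith [hcub, hL2', hL, pow_pos ht 3, mul_pos ht hL,
          mul_le_mul_of_nonneg_left hL2' (mul_pos ht hL).le]
      calc δ ≤ 3 * t ^ 3 / 128 := min_le_left _ _
        _ ≤ t / 2 - |S| / (2 * L) := by rw [habs]; exact h1
    · have habs1 : |S| ≤ 1 := by rw [hS]; exact Real.abs_sin_le_one _
      have h1 : |S| / (2 * L) ≤ t / 6 := by
        rw [div_le_iff₀ (by positivity)]
        nlinarith
      calc δ ≤ t / 3 := min_le_right _ _
        _ ≤ t / 2 - |S| / (2 * L) := by linarith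
  -- coefficient comparison
  have hc2 : (1 / (2 * L)) ^ 2 ≤ 1 / 3 := by
    rw [div_pow, div_le_div_iff₀ (by positivity) (by norm_num)]
    nlinarith
  have hab : 3 / 7 * (x ^ 2 + y ^ 2) ≤ a ^ 2 + y ^ 2 := by
    have h1 : a = x - 1 / (2 * L) * y := by rw [ha]; ring
    have h2 := mul_le_mul_of_nonneg_right hc2 (sq_nonneg y)
    rw [h1]
    nlinarith [sq_nonneg (4 * x - 7 * (1 / (2 * L) * y)), sq_nonneg y]
  -- assemble
  rw [hval, hF0, sub_zero]
  have hpos2L : (0:ℝ) ≤ 1 / (2 * L) := by positivity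
  have hmain : (a ^ 2 + y ^ 2) * (t / 2 - |S| / (2 * L)) ≤ F t := by
    have h := mul_le_mul_of_nonneg_left hK hpos2L
    have hFt : F t = (a ^ 2 + y ^ 2) / 2 * t +
        1 / (2 * L) * (S * ((y ^ 2 - a ^ 2) * C + 2 * a * y * S)) := by
      simp only [hF]
      rfl
    rw [hFt]
    have hexp : (a ^ 2 + y ^ 2) * (t / 2 - |S| / (2 * L)) =
        (a ^ 2 + y ^ 2) / 2 * t + 1 / (2 * L) * (-(|S| * (a ^ 2 + y ^ 2))) := by
      field_simp
      ring
    rw [hexp]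
    linarith
  calc 3 / 7 * δ * (x ^ 2 + y ^ 2) = δ * (3 / 7 * (x ^ 2 + y ^ 2)) := by ring
    _ ≤ δ * (a ^ 2 + y ^ 2) := mul_le_mul_of_nonneg_left hab hδpos.le
    _ = (a ^ 2 + y ^ 2) * δ := by ring
    _ ≤ (a ^ 2 + y ^ 2) * (t / 2 - |S| / (2 * L)) :=
        mul_le_mul_of_nonneg_left hstep (by positivity)
    _ ≤ F t := hmain

end
end

section
/- For every t > 0 there exists c > 0 such that for every pair of sequences (a,b) : ℤ³ → ℂ × ℂ one has Σ_{n∈ℤ³} ∫₀ᵗ e^{−s} | λ_n sin(sλ_n) a_n + (cos(sλ_n) − sin(sλ_n)/(2λ_n)) b_n |² ds ≥ c Σ_{n∈ℤ³} ( λ_n² |a_n|² + |b_n|² ). (This lower bound on the adjoint of the Duhamel map is equivalent to the existence of a bounded operator T_t : 𝓗² → L²([0,t]; ℓ²(ℤ³)) which is a right inverse of the linear Duhamel operator w ↦ ∫₀ᵗ S(t−s)(0, √2 w(s)) ds.) -/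
open scoped ENNReal

noncomputable section

namespace DuhamelAux
open Real


lemma my_abs_sin_le (x : ℝ) : |Real.sin x| ≤ |x| := by
  rcases le_total 1 |x| with h | h
  · exact (Real.abs_sin_le_one x).trans h
  · rcases le_total 0 x with hx | hx
    · rw [abs_of_nonneg hx]
      rw [abs_le]
      constructor
      · have h0 : 0 ≤ Real.sin x := Real.sin_nonneg_of_nonneg_of_le_pi hx
          (by rw [abs_of_nonneg hx] at h; linarith [Real.pi_gt_three])
        linarith
      · exact Real.sin_le hx
    · rw [abs_of_nonpos hx]
      rw [abs_le]
      rw [abs_of_nonpos hx] at h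
      constructor
      · have := Real.sin_le (show 0 ≤ -x by linarith)
        rw [Real.sin_neg] at this; linarith
      · have h0 : 0 ≤ Real.sin (-x) := Real.sin_nonneg_of_nonneg_of_le_pi (by linarith)
          (by linarith [Real.pi_gt_three])
        rw [Real.sin_neg] at h0; linarith

lemma sin_lipschitz (x y : ℝ) (h : y ≤ x) : |Real.sin x - Real.sin y| ≤ x - y := by
  rw [Real.sin_sub_sin]
  have h1 := my_abs_sin_le ((x - y) / 2)
  have h2 := Real.abs_cos_le_one ((x + y) / 2)
  rw [abs_of_nonneg (by linarith : (0:ℝ) ≤ (x - y)/2)] at h1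
  calc |2 * Real.sin ((x - y) / 2) * Real.cos ((x + y) / 2)|
      = 2 * |Real.sin ((x - y) / 2)| * |Real.cos ((x + y) / 2)| := by
        rw [abs_mul, abs_mul, abs_two]
    _ ≤ 2 * ((x - y)/2) * 1 := by
        apply mul_le_mul _ h2 (abs_nonneg _) (by linarith)
        apply mul_le_mul_of_nonneg_left h1 (by norm_num)
    _ = x - y := by ring

lemma mono_sq (x₀ x : ℝ) (h0 : 0 ≤ x₀) (h : x₀ ≤ x) :
    x₀ ^ 2 - Real.sin x₀ ^ 2 ≤ x ^ 2 - Real.sin x ^ 2 := by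
  have h1 := sin_lipschitz x x₀ h
  have h2 := my_abs_sin_le x
  have h3 := my_abs_sin_le x₀
  rw [abs_of_nonneg (by linarith : (0:ℝ) ≤ x)] at h2
  rw [abs_of_nonneg h0] at h3
  have h1' := abs_le.mp h1
  have h2' := abs_le.mp h2
  have h3' := abs_le.mp h3
  nlinarith [h1'.1, h1'.2, h2'.1, h2'.2, h3'.1, h3'.2]

lemma sin_cubic {x : ℝ} (h0 : 0 ≤ x) (h1 : x ≤ 1) : Real.sin x ≤ x - x ^ 3 / 9 := by
  have hb := Real.sin_bound (show |x| ≤ 1 by rwa [abs_of_nonneg h0])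
  rw [abs_of_nonneg h0] at hb
  have h := (abs_le.mp hb).2
  nlinarith [pow_le_pow_of_le_one h0 h1 (show 3 ≤ 4 by norm_num), pow_nonneg h0 3]


open Real

lemma int_exp (t : ℝ) : ∫ s in (0:ℝ)..t, Real.exp (-s) = 1 - Real.exp (-t) := by
  have hd : ∀ x ∈ Set.uIcc (0:ℝ) t, HasDerivAt (fun s => -Real.exp (-s)) (Real.exp (-x)) x := by
    intro x _
    have h : HasDerivAt (fun s : ℝ => Real.exp (-s)) (Real.exp (-x) * (-1)) x :=
      (Real.hasDerivAt_exp (-x)).comp x (hasDerivAt_neg x)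
    have h2 := h.neg; rw [mul_neg_one, neg_neg] at h2; exact h2
  rw [intervalIntegral.integral_eq_sub_of_hasDerivAt hd
    ((Real.continuous_exp.comp continuous_neg).intervalIntegrable 0 t)]
  simp
  ring

lemma hderiv_cos2 (ω x : ℝ) :
    HasDerivAt (fun s : ℝ => Real.cos (2 * (s * ω))) (-Real.sin (2 * (x * ω)) * (2 * ω)) x := by
  have hinner : HasDerivAt (fun s : ℝ => 2 * (s * ω)) (2 * ω) x := by
    simpa using ((hasDerivAt_id x).mul_const ω).const_mul 2
  exact (Real.hasDerivAt_cos (2 * (x * ω))).comp x hinner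

lemma hderiv_sin2 (ω x : ℝ) :
    HasDerivAt (fun s : ℝ => Real.sin (2 * (s * ω))) (Real.cos (2 * (x * ω)) * (2 * ω)) x := by
  have hinner : HasDerivAt (fun s : ℝ => 2 * (s * ω)) (2 * ω) x := by
    simpa using ((hasDerivAt_id x).mul_const ω).const_mul 2
  exact (Real.hasDerivAt_sin (2 * (x * ω))).comp x hinner

lemma hderiv_expneg (x : ℝ) : HasDerivAt (fun s : ℝ => Real.exp (-s)) (-Real.exp (-x)) x := by
  have h : HasDerivAt (fun s : ℝ => Real.exp (-s)) (Real.exp (-x) * (-1)) x :=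
    (Real.hasDerivAt_exp (-x)).comp x (hasDerivAt_neg x)
  simpa using h

lemma int_exp_cos (ω t : ℝ) :
    ∫ s in (0:ℝ)..t, Real.exp (-s) * Real.cos (2 * (s * ω)) =
      (1 - Real.exp (-t) * Real.cos (2 * (t * ω)) + 2 * ω * Real.exp (-t) * Real.sin (2 * (t * ω)))
        / (1 + 4 * ω ^ 2) := by
  have hD : (0:ℝ) < 1 + 4 * ω ^ 2 := by positivity
  have hd : ∀ x ∈ Set.uIcc (0:ℝ) t,
      HasDerivAt (fun s => Real.exp (-s) * (-Real.cos (2 * (s * ω)) + 2 * ω * Real.sin (2 * (s * ω)))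
        / (1 + 4 * ω ^ 2)) (Real.exp (-x) * Real.cos (2 * (x * ω))) x := by
    intro x _
    have h := (((hderiv_expneg x).mul (((hderiv_cos2 ω x).neg).add
      ((hderiv_sin2 ω x).const_mul (2 * ω)))).div_const (1 + 4 * ω ^ 2))
    refine h.congr_deriv ?_
    simp only [Pi.add_apply, Pi.neg_apply, Pi.sub_apply]
    field_simp
    ring
  have hcont : Continuous fun s : ℝ => Real.exp (-s) * Real.cos (2 * (s * ω)) := by fun_prop
  rw [intervalIntegral.integral_eq_sub_of_hasDerivAt hd (hcont.intervalIntegrable 0 t)]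
  simp [Real.exp_zero]
  field_simp
  ring

lemma int_exp_sin (ω t : ℝ) :
    ∫ s in (0:ℝ)..t, Real.exp (-s) * Real.sin (2 * (s * ω)) =
      (2 * ω - Real.exp (-t) * Real.sin (2 * (t * ω)) - 2 * ω * Real.exp (-t) * Real.cos (2 * (t * ω)))
        / (1 + 4 * ω ^ 2) := by
  have hD : (0:ℝ) < 1 + 4 * ω ^ 2 := by positivity
  have hd : ∀ x ∈ Set.uIcc (0:ℝ) t,
      HasDerivAt (fun s => Real.exp (-s) * (-Real.sin (2 * (s * ω)) - 2 * ω * Real.cos (2 * (s * ω)))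
        / (1 + 4 * ω ^ 2)) (Real.exp (-x) * Real.sin (2 * (x * ω))) x := by
    intro x _
    have h := (((hderiv_expneg x).mul (((hderiv_sin2 ω x).neg).sub
      ((hderiv_cos2 ω x).const_mul (2 * ω)))).div_const (1 + 4 * ω ^ 2))
    refine h.congr_deriv ?_
    simp only [Pi.add_apply, Pi.neg_apply, Pi.sub_apply]
    field_simp
    ring
  have hcont : Continuous fun s : ℝ => Real.exp (-s) * Real.sin (2 * (s * ω)) := by fun_prop
  rw [intervalIntegral.integral_eq_sub_of_hasDerivAt hd (hcont.intervalIntegrable 0 t)]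
  simp [Real.exp_zero]
  field_simp
  ring


open Real


lemma lem_sinh (t : ℝ) (ht0 : 0 < t) : Real.exp (-t) * t ^ 2 ≤ (1 - Real.exp (-t)) ^ 2 := by
  have hvpos : 0 < Real.exp (-(t/2)) := Real.exp_pos _
  have huv : Real.exp (t/2) * Real.exp (-(t/2)) = 1 := by rw [← Real.exp_add]; simp
  have hv2 : Real.exp (-(t/2)) ^ 2 = Real.exp (-t) := by rw [sq, ← Real.exp_add]; ring_nf
  have hs : t / 2 ≤ Real.sinh (t / 2) := Real.self_le_sinh_iff.mpr (by linarith)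
  rw [Real.sinh_eq] at hs
  set v := Real.exp (-(t/2))
  set u := Real.exp (t/2)
  have hsub : t ≤ u - v := by linarith
  have h2 : (1:ℝ) - Real.exp (-t) = v * (u - v) := by rw [← hv2]; nlinarith [huv]
  have h3 : t * t ≤ (u - v) * (u - v) :=
    mul_le_mul hsub hsub (le_of_lt ht0) (le_trans (le_of_lt ht0) hsub)
  have h4 := mul_le_mul_of_nonneg_left h3 (sq_nonneg v)
  nlinarith [hv2, h2, h4]

lemma lem_hlow (t x : ℝ) (ht0 : 0 < t) (ht1 : t ≤ 1) (hx0 : 0 < x) (hx2 : x ≤ 2)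
    (hx2t : 3/4 * t ^ 2 ≤ x ^ 2) : (9/80) * t ^ 4 ≤ x ^ 2 - Real.sin x ^ 2 := by
  have ht4 : t ^ 4 ≤ 1 := pow_le_one₀ (le_of_lt ht0) ht1
  rcases le_total x 1 with hx1 | hx1
  · have hs1 : Real.sin x ≤ x - x ^ 3 / 9 := sin_cubic (le_of_lt hx0) hx1
    have hs0 : 0 ≤ Real.sin x := Real.sin_nonneg_of_nonneg_of_le_pi (le_of_lt hx0)
      (by linarith [Real.pi_gt_three])
    have hsq : Real.sin x ^ 2 ≤ (x - x ^ 3 / 9) ^ 2 := pow_le_pow_left₀ hs0 hs1 2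
    have hx6 : x ^ 6 ≤ x ^ 4 := pow_le_pow_of_le_one (le_of_lt hx0) hx1 (by norm_num)
    have haux : (3/4) * t ^ 2 * ((3/4) * t ^ 2) ≤ x ^ 2 * x ^ 2 :=
      mul_le_mul hx2t hx2t (by positivity) (sq_nonneg x)
    nlinarith [hsq, hx6, haux]
  · have hm := mono_sq 1 x (by norm_num) hx1
    have hs1 : Real.sin 1 ≤ 8/9 := by
      have := sin_cubic (show (0:ℝ) ≤ 1 by norm_num) (le_refl 1)
      norm_num at this; linarith
    have hs0 : 0 ≤ Real.sin 1 := Real.sin_nonneg_of_nonneg_of_le_pi (by norm_num)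
      (by linarith [Real.pi_gt_three])
    have hsq1 : Real.sin 1 ^ 2 ≤ 64/81 := by nlinarith
    nlinarith [hm, hsq1, ht4]

lemma key_bound (t ω : ℝ) (ht0 : 0 < t) (ht1 : t ≤ 1) (hω : 3/4 ≤ ω ^ 2) (hω0 : 0 < ω) :
    (9/340) * Real.exp (-t) * t ^ 6 * (1 + 4 * ω ^ 2) ≤
      4 * (ω ^ 2 * (1 - Real.exp (-t)) ^ 2 - Real.exp (-t) * Real.sin (t * ω) ^ 2) := by
  set E := Real.exp (-t) with hE
  have hEpos : 0 < E := Real.exp_pos _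
  have ht2 : t ^ 2 ≤ 1 := pow_le_one₀ (le_of_lt ht0) ht1
  have ht4 : t ^ 4 ≤ 1 := pow_le_one₀ (le_of_lt ht0) ht1
  have h1E : E * t ^ 2 ≤ (1 - E) ^ 2 := lem_sinh t ht0
  have hx0 : 0 < t * ω := by positivity
  have hsin := Real.sin_sq_le_one (t * ω)
  have hsinE : E * Real.sin (t * ω) ^ 2 ≤ E := by nlinarith [hsin, hEpos]
  have hc : E * (t ^ 2 * ω ^ 2) ≤ ω ^ 2 * (1 - E) ^ 2 := by
    nlinarith [mul_le_mul_of_nonneg_right h1E (le_of_lt (show (0:ℝ) < ω ^ 2 by positivity))]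
  rcases le_total (t * ω) 2 with hx2 | hx2
  · have hωt2 : t ^ 2 * ω ^ 2 ≤ 4 := by nlinarith [mul_le_mul hx2 hx2 (le_of_lt hx0) (by norm_num : (0:ℝ) ≤ 2)]
    have hD' : (1 + 4 * ω ^ 2) * t ^ 2 ≤ 17 := by nlinarith [hωt2, ht2]
    have hx2t : 3/4 * t ^ 2 ≤ (t * ω) ^ 2 := by nlinarith [sq_nonneg t, mul_le_mul_of_nonneg_left hω (sq_nonneg t)]
    have hlow := lem_hlow t (t * ω) ht0 ht1 hx0 hx2 hx2t
    have h5 := mul_le_mul_of_nonneg_left hlow (le_of_lt hEpos)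
    have h6 : (9/340) * E * t ^ 4 * ((1 + 4 * ω ^ 2) * t ^ 2) ≤ (9/340) * E * t ^ 4 * 17 :=
      mul_le_mul_of_nonneg_left hD' (by positivity)
    nlinarith [h5, h6, hc]
  · have hx4 : (4:ℝ) ≤ t ^ 2 * ω ^ 2 := by
      nlinarith [mul_le_mul hx2 hx2 (by norm_num : (0:ℝ) ≤ 2) (le_of_lt hx0)]
    have hD2 : (1 + 4 * ω ^ 2) ≤ (16/3) * ω ^ 2 := by linarith
    have hA : (9/340) * E * t ^ 6 * (1 + 4 * ω ^ 2) ≤ (9/340) * E * t ^ 6 * ((16/3) * ω ^ 2) :=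
      mul_le_mul_of_nonneg_left hD2 (by positivity)
    have hB : (9/340) * E * t ^ 6 * ((16/3) * ω ^ 2) ≤ 3 * (E * (t ^ 2 * ω ^ 2)) := by
      have h := mul_le_mul_of_nonneg_left ht4
        (show (0:ℝ) ≤ (12/85) * E * (t ^ 2 * ω ^ 2) by positivity)
      linarith [h, (show (0:ℝ) ≤ E * (t ^ 2 * ω ^ 2) by positivity)]
    have hC : 3 * (E * (t ^ 2 * ω ^ 2)) ≤ 4 * (E * (t ^ 2 * ω ^ 2) - E) := by
      have h := mul_le_mul_of_nonneg_left hx4 (le_of_lt hEpos)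
      linarith [h, (show (0:ℝ) ≤ E * (t ^ 2 * ω ^ 2) by positivity)]
    have hD3 : 4 * (E * (t ^ 2 * ω ^ 2) - E) ≤ 4 * (ω ^ 2 * (1 - E) ^ 2 - E * Real.sin (t * ω) ^ 2) := by
      linarith [hc, hsinE]
    linarith [hA, hB, hC, hD3]


open Real

lemma Ksq_le (t ω : ℝ) (ht0 : 0 < t) (ht1 : t ≤ 1) (hω : 3/4 ≤ ω ^ 2) (hω0 : 0 < ω) :
    ((1 - Real.exp (-t) * Real.cos (2 * (t * ω)) + 2 * ω * Real.exp (-t) * Real.sin (2 * (t * ω)))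
        / (1 + 4 * ω ^ 2)) ^ 2 +
      ((2 * ω - Real.exp (-t) * Real.sin (2 * (t * ω)) - 2 * ω * Real.exp (-t) * Real.cos (2 * (t * ω)))
        / (1 + 4 * ω ^ 2)) ^ 2 ≤
      (1 - Real.exp (-t)) ^ 2 - (9/340) * Real.exp (-t) * t ^ 6 := by
  have hD : (0:ℝ) < 1 + 4 * ω ^ 2 := by positivity
  have hDne : (1 + 4 * ω ^ 2) ≠ 0 := ne_of_gt hD
  set E := Real.exp (-t) with hE
  have hnum : (1 - E * Real.cos (2 * (t * ω)) + 2 * ω * E * Real.sin (2 * (t * ω))) ^ 2 +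
      (2 * ω - E * Real.sin (2 * (t * ω)) - 2 * ω * E * Real.cos (2 * (t * ω))) ^ 2 =
      (1 + E ^ 2 - 2 * E * Real.cos (2 * (t * ω))) * (1 + 4 * ω ^ 2) := by
    linear_combination (E ^ 2 * (1 + 4 * ω ^ 2)) * Real.sin_sq_add_cos_sq (2 * (t * ω))
  rw [div_pow, div_pow, ← add_div, hnum]
  rw [sq (1 + 4 * ω ^ 2), mul_div_mul_right _ _ hDne, div_le_iff₀ hD]
  have hct : Real.cos (2 * (t * ω)) = 1 - 2 * Real.sin (t * ω) ^ 2 := by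
    rw [Real.cos_two_mul]; linear_combination 2 * Real.sin_sq_add_cos_sq (t * ω)
  rw [hct]
  have kb := key_bound t ω ht0 ht1 hω hω0
  linarith [kb]

lemma quad_lower (τ δ Ic Is p q : ℝ) (hτ0 : 0 < τ) (hτ1 : τ ≤ 1) (hδ0 : 0 < δ)
    (hIK : Ic ^ 2 + Is ^ 2 ≤ τ ^ 2 - δ) :
    δ * (p ^ 2 + q ^ 2) ≤ 2 * (p ^ 2 + q ^ 2) * τ +
      ((2 * (p ^ 2 - q ^ 2)) * Ic + (-(4 * p * q)) * Is) := by
  set S := p ^ 2 + q ^ 2 with hS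
  set X := (2 * (p ^ 2 - q ^ 2)) * Ic + (-(4 * p * q)) * Is with hX
  clear_value S X
  have hS0 : 0 ≤ S := by rw [hS]; positivity
  have hδτ : δ ≤ τ ^ 2 := by nlinarith [sq_nonneg Ic, sq_nonneg Is]
  have hhalf : 0 ≤ τ - δ / 2 := by nlinarith
  have hKle : Ic ^ 2 + Is ^ 2 ≤ (τ - δ / 2) ^ 2 := by nlinarith
  have hCS : X ^ 2 ≤ (2 * S) ^ 2 * (τ - δ / 2) ^ 2 := by
    have h1 : X ^ 2 ≤ (2 * S) ^ 2 * (Ic ^ 2 + Is ^ 2) := by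
      rw [hX, hS]
      nlinarith [sq_nonneg (2 * (p ^ 2 - q ^ 2) * Is + 4 * p * q * Ic)]
    have h2 : (2 * S) ^ 2 * (Ic ^ 2 + Is ^ 2) ≤ (2 * S) ^ 2 * (τ - δ / 2) ^ 2 :=
      mul_le_mul_of_nonneg_left hKle (by positivity)
    exact le_trans h1 h2
  have hXlb : -(2 * S * (τ - δ / 2)) ≤ X := by
    have hA0 : 0 ≤ 2 * S * (τ - δ / 2) := by positivity
    nlinarith [sq_nonneg (X + 2 * S * (τ - δ / 2)), hCS, hA0]
  nlinarith [hXlb, hS0, hδ0]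

lemma core (t ω : ℝ) (ht0 : 0 < t) (ht1 : t ≤ 1) (hω : 3/4 ≤ ω ^ 2) (hω0 : 0 < ω) (u v : ℝ) :
    (9/2720) * Real.exp (-t) * t ^ 6 * (ω ^ 2 * u ^ 2 + v ^ 2) ≤
      ∫ s in (0:ℝ)..t, Real.exp (-s) *
        (ω * Real.sin (s * ω) * u + (Real.cos (s * ω) - Real.sin (s * ω) / (2 * ω)) * v) ^ 2 := by
  have hωne : ω ≠ 0 := ne_of_gt hω0
  set p := v / 2 with hp
  set q := -(ω * u) / 2 + v / (4 * ω) with hq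
  clear_value p q
  -- pointwise identity
  have hpt : ∀ s : ℝ, Real.exp (-s) *
      (ω * Real.sin (s * ω) * u + (Real.cos (s * ω) - Real.sin (s * ω) / (2 * ω)) * v) ^ 2
      = 2 * (p ^ 2 + q ^ 2) * Real.exp (-s)
        + (2 * (p ^ 2 - q ^ 2)) * (Real.exp (-s) * Real.cos (2 * (s * ω)))
        + (-(4 * p * q)) * (Real.exp (-s) * Real.sin (2 * (s * ω))) := by
    intro s
    have h1 : ω * Real.sin (s * ω) * u + (Real.cos (s * ω) - Real.sin (s * ω) / (2 * ω)) * v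
        = 2 * p * Real.cos (s * ω) - 2 * q * Real.sin (s * ω) := by
      rw [hp, hq]; field_simp; ring
    rw [h1, Real.cos_two_mul, Real.sin_two_mul]
    linear_combination (4 * q ^ 2 * Real.exp (-s)) * Real.sin_sq_add_cos_sq (s * ω)
  have hval : (∫ s in (0:ℝ)..t, Real.exp (-s) *
      (ω * Real.sin (s * ω) * u + (Real.cos (s * ω) - Real.sin (s * ω) / (2 * ω)) * v) ^ 2)
      = 2 * (p ^ 2 + q ^ 2) * (1 - Real.exp (-t))
        + (2 * (p ^ 2 - q ^ 2)) * ((1 - Real.exp (-t) * Real.cos (2 * (t * ω))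
            + 2 * ω * Real.exp (-t) * Real.sin (2 * (t * ω))) / (1 + 4 * ω ^ 2))
        + (-(4 * p * q)) * ((2 * ω - Real.exp (-t) * Real.sin (2 * (t * ω))
            - 2 * ω * Real.exp (-t) * Real.cos (2 * (t * ω))) / (1 + 4 * ω ^ 2)) := by
    simp only [hpt]
    have c1 : Continuous fun s : ℝ => 2 * (p ^ 2 + q ^ 2) * Real.exp (-s) := by fun_prop
    have c2 : Continuous fun s : ℝ =>
        (2 * (p ^ 2 - q ^ 2)) * (Real.exp (-s) * Real.cos (2 * (s * ω))) := by fun_prop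
    have c3 : Continuous fun s : ℝ =>
        (-(4 * p * q)) * (Real.exp (-s) * Real.sin (2 * (s * ω))) := by fun_prop
    rw [intervalIntegral.integral_add ((show Continuous fun s : ℝ => 2 * (p ^ 2 + q ^ 2) * Real.exp (-s) +
        (2 * (p ^ 2 - q ^ 2)) * (Real.exp (-s) * Real.cos (2 * (s * ω))) from c1.add c2).intervalIntegrable 0 t)
      (c3.intervalIntegrable 0 t),
      intervalIntegral.integral_add (c1.intervalIntegrable 0 t) (c2.intervalIntegrable 0 t),
      intervalIntegral.integral_const_mul, intervalIntegral.integral_const_mul,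
      intervalIntegral.integral_const_mul, int_exp, int_exp_cos, int_exp_sin]
  rw [hval]
  -- now a pure inequality
  have hEpos : 0 < Real.exp (-t) := Real.exp_pos _
  have hE1 : Real.exp (-t) < 1 := Real.exp_lt_one_iff.mpr (by linarith)
  have hrel : 4 * ω * q = -(2 * ω ^ 2 * u) + v := by rw [hq]; field_simp; ring
  have hS8 : ω ^ 2 * u ^ 2 + v ^ 2 ≤ 8 * (p ^ 2 + q ^ 2) := by
    have hω2 : (0:ℝ) < ω ^ 2 := by positivity
    have hv2p : v = 2 * p := by rw [hp]; ring
    have hrel2 : 4 * ω ^ 4 * u ^ 2 = (v - 4 * ω * q) ^ 2 := by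
      linear_combination (v - 4 * ω * q + 2 * ω ^ 2 * u) * hrel
    have hmul : ω ^ 2 * (ω ^ 2 * u ^ 2 + v ^ 2) ≤ ω ^ 2 * (8 * (p ^ 2 + q ^ 2)) := by
      rw [hv2p] at hrel2 ⊢
      nlinarith [hrel2, sq_nonneg (2 * ω * q + p), mul_le_mul_of_nonneg_left hω (sq_nonneg p)]
    exact le_of_mul_le_mul_left hmul hω2
  have hmain := quad_lower (1 - Real.exp (-t)) ((9/340) * Real.exp (-t) * t ^ 6)
    ((1 - Real.exp (-t) * Real.cos (2 * (t * ω)) + 2 * ω * Real.exp (-t) * Real.sin (2 * (t * ω)))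
        / (1 + 4 * ω ^ 2))
    ((2 * ω - Real.exp (-t) * Real.sin (2 * (t * ω)) - 2 * ω * Real.exp (-t) * Real.cos (2 * (t * ω)))
        / (1 + 4 * ω ^ 2)) p q (by linarith) (by linarith) (by positivity)
    (Ksq_le t ω ht0 ht1 hω hω0)
  have hfin2 : (9/2720) * Real.exp (-t) * t ^ 6 * (ω ^ 2 * u ^ 2 + v ^ 2) ≤
      (9/340) * Real.exp (-t) * t ^ 6 * (p ^ 2 + q ^ 2) := by
    have h := mul_le_mul_of_nonneg_left hS8
      (le_of_lt (show (0:ℝ) < (9/2720) * Real.exp (-t) * t ^ 6 by positivity))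
    linarith [h]
  linarith [hmain, hfin2]


lemma norm_comb (r₁ r₂ : ℝ) (a b : ℂ) :
    ‖(r₁ : ℂ) * a + (r₂ : ℂ) * b‖ ^ 2 =
      (r₁ * a.re + r₂ * b.re) ^ 2 + (r₁ * a.im + r₂ * b.im) ^ 2 := by
  rw [Complex.sq_norm, Complex.normSq_apply]
  simp [Complex.add_re, Complex.add_im, Complex.mul_re, Complex.mul_im]
  ring

lemma core_complex (t ω : ℝ) (ht0 : 0 < t) (ht1 : t ≤ 1) (hω : 3/4 ≤ ω ^ 2) (hω0 : 0 < ω)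
    (a b : ℂ) :
    (9/2720) * Real.exp (-t) * t ^ 6 * (ω ^ 2 * ‖a‖ ^ 2 + ‖b‖ ^ 2) ≤
      ∫ s in (0:ℝ)..t, Real.exp (-s) *
        ‖((ω * Real.sin (s * ω) : ℝ) : ℂ) * a +
          ((Real.cos (s * ω) - Real.sin (s * ω) / (2 * ω) : ℝ) : ℂ) * b‖ ^ 2 := by
  have hsplit : ∀ s : ℝ, Real.exp (-s) *
      ‖((ω * Real.sin (s * ω) : ℝ) : ℂ) * a +
        ((Real.cos (s * ω) - Real.sin (s * ω) / (2 * ω) : ℝ) : ℂ) * b‖ ^ 2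
      = Real.exp (-s) * (ω * Real.sin (s * ω) * a.re +
          (Real.cos (s * ω) - Real.sin (s * ω) / (2 * ω)) * b.re) ^ 2
        + Real.exp (-s) * (ω * Real.sin (s * ω) * a.im +
          (Real.cos (s * ω) - Real.sin (s * ω) / (2 * ω)) * b.im) ^ 2 := by
    intro s; rw [norm_comb]; ring
  simp only [hsplit]
  have c1 : Continuous fun s : ℝ => Real.exp (-s) * (ω * Real.sin (s * ω) * a.re +
      (Real.cos (s * ω) - Real.sin (s * ω) / (2 * ω)) * b.re) ^ 2 := by fun_prop
  have c2 : Continuous fun s : ℝ => Real.exp (-s) * (ω * Real.sin (s * ω) * a.im +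
      (Real.cos (s * ω) - Real.sin (s * ω) / (2 * ω)) * b.im) ^ 2 := by fun_prop
  rw [intervalIntegral.integral_add (c1.intervalIntegrable 0 t) (c2.intervalIntegrable 0 t)]
  have h1 := core t ω ht0 ht1 hω hω0 a.re b.re
  have h2 := core t ω ht0 ht1 hω hω0 a.im b.im
  have hna : ‖a‖ ^ 2 = a.re ^ 2 + a.im ^ 2 := by
    rw [Complex.sq_norm, Complex.normSq_apply]; ring
  have hnb : ‖b‖ ^ 2 = b.re ^ 2 + b.im ^ 2 := by
    rw [Complex.sq_norm, Complex.normSq_apply]; ring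
  rw [hna, hnb]
  nlinarith [h1, h2]

end DuhamelAux

/-- lower bound for the adjoint of the Duhamel operator:
`Σ_n ∫₀ᵗ e^{−s}|λ_n sin(sλ_n) a_n + (cos(sλ_n) − sin(sλ_n)/(2λ_n)) b_n|² ds
  ≥ c Σ_n (λ_n²|a_n|² + |b_n|²)`. -/
theorem duhamel_adjoint_lower_bound :
    ∀ t : ℝ, 0 < t → ∃ c : ℝ, 0 < c ∧ ∀ a b : (Fin 3 → ℤ) → ℂ,
      ENNReal.ofReal c *
        ∑' n : Fin 3 → ℤ, ENNReal.ofReal ((lam n) ^ 2 * ‖a n‖ ^ 2 + ‖b n‖ ^ 2) ≤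
      ∑' n : Fin 3 → ℤ, ENNReal.ofReal (∫ s in (0 : ℝ)..t, Real.exp (-s) *
        ‖((lam n * Real.sin (s * lam n) : ℝ) : ℂ) * a n +
          ((Real.cos (s * lam n) - Real.sin (s * lam n) / (2 * lam n) : ℝ) : ℂ) * b n‖ ^ 2) := by
  intro t ht
  have ht'0 : 0 < min t 1 := lt_min ht one_pos
  have ht'1 : min t 1 ≤ 1 := min_le_right t 1
  have ht't : min t 1 ≤ t := min_le_left t 1
  refine ⟨(9/2720) * Real.exp (-(min t 1)) * (min t 1) ^ 6, by positivity, ?_⟩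
  intro a b
  rw [← ENNReal.tsum_mul_left]
  apply ENNReal.tsum_le_tsum
  intro n
  rw [← ENNReal.ofReal_mul (by positivity)]
  apply ENNReal.ofReal_le_ofReal
  have hnsq : 0 ≤ nsq n := Finset.sum_nonneg fun i _ => sq_nonneg _
  have hω2 : 3/4 ≤ lam n ^ 2 := by
    rw [lam, Real.sq_sqrt (by positivity)]
    nlinarith [sq_nonneg (nsq n)]
  have hω0 : 0 < lam n := Real.sqrt_pos.mpr (by positivity)
  have hcont : Continuous fun s : ℝ => Real.exp (-s) *
      ‖((lam n * Real.sin (s * lam n) : ℝ) : ℂ) * a n +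
        ((Real.cos (s * lam n) - Real.sin (s * lam n) / (2 * lam n) : ℝ) : ℂ) * b n‖ ^ 2 := by
    fun_prop
  have hmono : (∫ s in (0:ℝ)..(min t 1), Real.exp (-s) *
      ‖((lam n * Real.sin (s * lam n) : ℝ) : ℂ) * a n +
        ((Real.cos (s * lam n) - Real.sin (s * lam n) / (2 * lam n) : ℝ) : ℂ) * b n‖ ^ 2)
      ≤ ∫ s in (0:ℝ)..t, Real.exp (-s) *
      ‖((lam n * Real.sin (s * lam n) : ℝ) : ℂ) * a n +
        ((Real.cos (s * lam n) - Real.sin (s * lam n) / (2 * lam n) : ℝ) : ℂ) * b n‖ ^ 2 := by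
    rw [← intervalIntegral.integral_add_adjacent_intervals
      (hcont.intervalIntegrable 0 (min t 1)) (hcont.intervalIntegrable (min t 1) t)]
    have hnn : 0 ≤ ∫ s in (min t 1)..t, Real.exp (-s) *
        ‖((lam n * Real.sin (s * lam n) : ℝ) : ℂ) * a n +
          ((Real.cos (s * lam n) - Real.sin (s * lam n) / (2 * lam n) : ℝ) : ℂ) * b n‖ ^ 2 :=
      intervalIntegral.integral_nonneg ht't (fun s _ => by positivity)
    linarith
  exact le_trans
    (DuhamelAux.core_complex (min t 1) (lam n) ht'0 ht'1 hω2 hω0 (a n) (b n)) hmono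

end
end

section
/- Let I be a countable index set and let (X_i)_{i∈I} be an independent family of standard real Gaussian random variables, and let γ denote the law of (X_i)_{i∈I} on ℝ^I (with the product σ-algebra). Let E ⊆ ℝ^I be measurable and suppose E + c = E for every finitely supported c ∈ ℝ^I (i.e. c_i = 0 for all but finitely many i). Then γ(E) ∈ {0,1}. -/
open MeasureTheory ProbabilityTheory

/-- Kolmogorov 0–1 law for Gaussian measure on `ℝ^I` (`I` countable) and sets
invariant under translation by all finitely supported vectors. -/
theorem gaussian_zero_one_law {I : Type*} [Countable I]
    (γ : Measure (I → ℝ)) [IsProbabilityMeasure γ]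
    (hindep : iIndepFun (fun i (x : I → ℝ) => x i) γ)
    (hgauss : ∀ i, Measure.map (fun x : I → ℝ => x i) γ = gaussianReal 0 1)
    (E : Set (I → ℝ)) (hE : MeasurableSet E)
    (htrans : ∀ c : I → ℝ, {i | c i ≠ 0}.Finite → (fun x => x + c) '' E = E) :
    γ E = 0 ∨ γ E = 1 := by
  classical
  set s : I → MeasurableSpace (I → ℝ) :=
    fun i => MeasurableSpace.comap (fun x : I → ℝ => x i) inferInstance with hs
  have h_le : ∀ i, s i ≤ MeasurableSpace.pi := fun i =>
    (measurable_pi_apply i).comap_le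
  -- membership version of translation invariance
  have hmem : ∀ (c : I → ℝ), {i | c i ≠ 0}.Finite → ∀ y : I → ℝ, y + c ∈ E ↔ y ∈ E := by
    intro c hc y
    constructor
    · intro h
      rw [← htrans c hc] at h
      obtain ⟨z, hz, hzy⟩ := h
      have : z = y := by
        have := add_right_cancel hzy
        exact this
      rwa [this] at hz
    · intro h
      rw [← htrans c hc]
      exact ⟨y, h, rfl⟩
  -- key claim: E is measurable w.r.t. coordinates in `u` whenever `uᶜ` is finite
  have key : ∀ u : Set I, uᶜ.Finite → MeasurableSet[⨆ i ∈ u, s i] E := by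
    intro u hu
    set φ : (I → ℝ) → (I → ℝ) := fun x i => if i ∈ u then x i else 0 with hφ
    have hφmeas : @Measurable _ _ (⨆ i ∈ u, s i) MeasurableSpace.pi φ := by
      apply @measurable_pi_lambda (I → ℝ) I (fun _ => ℝ) (⨆ i ∈ u, s i) _ φ
      intro i
      by_cases hi : i ∈ u
      · simp only [hφ, hi, if_true]
        have h1 : @Measurable _ _ (s i) _ (fun x : I → ℝ => x i) := by
          rw [hs]
          exact Measurable.of_comap_le le_rfl
        exact h1.mono (le_iSup₂ (f := fun i _ => s i) i hi) le_rfl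
      · simp only [hφ, hi, if_false]
        exact measurable_const
    have hEφ : E = φ ⁻¹' E := by
      ext x
      have hc : {i | (fun i => if i ∈ u then 0 else x i) i ≠ 0}.Finite := by
        apply hu.subset
        intro i hi
        simp only [Set.mem_setOf_eq] at hi
        by_contra h
        simp only [Set.mem_compl_iff, not_not] at h
        simp [h] at hi
      have hx : φ x + (fun i => if i ∈ u then 0 else x i) = x := by
        funext i
        by_cases hi : i ∈ u <;> simp [hφ, hi]
      constructor
      · intro hx'
        show φ x ∈ E
        rw [← (hmem _ hc (φ x)), hx]
        exact hx'
      · intro hx'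
        have := (hmem _ hc (φ x)).2 hx'
        rwa [hx] at this
    rw [hEφ]
    exact hφmeas hE
  -- E is measurable w.r.t. the tail σ-algebra `limsup s cofinite`
  have htail : MeasurableSet[Filter.limsup s Filter.cofinite] E := by
    rw [Filter.limsup_eq_iInf_iSup]
    rw [MeasurableSpace.measurableSet_iInf]
    intro u
    rw [MeasurableSpace.measurableSet_iInf]
    intro hu
    exact key u (Filter.mem_cofinite.mp hu)
  exact measure_zero_or_one_of_measurableSet_limsup (p := fun t : Set I => t.Finite)
    (ns := fun J : Finset I => (J : Set I)) h_le hindep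
    (fun t ht => by rwa [Filter.mem_cofinite, compl_compl])
    (fun J K => ⟨J ∪ K, by simp [Finset.coe_union, Set.subset_union_left],
      by simp [Finset.coe_union, Set.subset_union_right]⟩)
    (fun J => J.finite_toSet)
    (fun i => ⟨{i}, by simp⟩)
    htail
end

section
/- Let I be a countable index set, let γ be the law on ℝ^I (with the product σ-algebra) of an independent family of standard real Gaussian random variables, and let ν be a probability measure on ℝ^I with ν absolutely continuous with respect to γ. Then for every measurable set E ⊆ ℝ^I satisfying E + c = E for every finitely supported c ∈ ℝ^I, one has ν(E) = γ(E) (and this common value is 0 or 1). -/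
open MeasureTheory ProbabilityTheory Filter

lemma aux_meas_lambda {X : Type*} {mX : MeasurableSpace X} {δ : Type*} {π : δ → Type*}
    [∀ a, MeasurableSpace (π a)] (f : X → ∀ a, π a)
    (h : ∀ a, Measurable fun x => f x a) : Measurable f :=
  @measurable_pi_lambda X δ π mX _ f h

/-- if `ν ≪ γ` with `γ` the Gaussian measure on `ℝ^I` (`I` countable), then `ν`
and `γ` agree on every set invariant under translation by all finitely supported vectors
(and the common value is 0 or 1). -/
theorem abs_continuous_agrees_on_translation_invariant_sets {I : Type*} [Countable I]
    (γ : Measure (I → ℝ)) [IsProbabilityMeasure γ]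
    (hindep : iIndepFun (fun i (x : I → ℝ) => x i) γ)
    (hgauss : ∀ i, Measure.map (fun x : I → ℝ => x i) γ = gaussianReal 0 1)
    (ν : Measure (I → ℝ)) [IsProbabilityMeasure ν] (hac : ν ≪ γ)
    (E : Set (I → ℝ)) (hE : MeasurableSet E)
    (htrans : ∀ c : I → ℝ, {i | c i ≠ 0}.Finite → (fun x => x + c) '' E = E) :
    ν E = γ E ∧ (γ E = 0 ∨ γ E = 1) := by
  classical
  have key : ∀ (x c : I → ℝ), {i | c i ≠ 0}.Finite → x ∈ E → x + c ∈ E := by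
    intro x c hc hx
    rw [← htrans c hc]
    exact ⟨x, hx, rfl⟩
  have h01 : γ E = 0 ∨ γ E = 1 := by
    cases finite_or_infinite I with
    | inl hfin =>
      rcases E.eq_empty_or_nonempty with rfl | ⟨x, hx⟩
      · left; simp
      · right
        have hEuniv : E = Set.univ := by
          ext y
          simp only [Set.mem_univ, iff_true]
          have hy := key x (y - x) (Set.toFinite _) hx
          simpa using hy
        rw [hEuniv]
        exact measure_univ
    | inr hinf =>
      have : Encodable I := Encodable.ofCountable I
      have : Denumerable I := Denumerable.ofEncodableOfInfinite I
      let e : ℕ ≃ I := (Denumerable.eqv I).symm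
      set s : ℕ → MeasurableSpace (I → ℝ) :=
        fun n => MeasurableSpace.comap (fun x : I → ℝ => x (e n)) inferInstance with hs
      have h_le : ∀ n, s n ≤ (inferInstance : MeasurableSpace (I → ℝ)) := fun n =>
        (measurable_pi_apply (e n)).comap_le
      have h_indep : iIndep s γ := by
      -- reindex the independence along `e`
        have h : iIndepFun
            (fun n (x : I → ℝ) => x (e n)) γ := by
          rw [iIndepFun_iff_measure_inter_preimage_eq_mul]
          intro S sets hsets
          have h := (iIndepFun_iff_measure_inter_preimage_eq_mul.1 hindep)
            (S.image e) (sets := fun i => sets (e.symm i)) ?_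
          · have h1 : (⋂ i ∈ S.image e, (fun x : I → ℝ => x i) ⁻¹' sets (e.symm i))
                = ⋂ n ∈ S, (fun x : I → ℝ => x (e n)) ⁻¹' sets n := by
              rw [Finset.set_biInter_finset_image]
              simp
            have h2 : (∏ i ∈ S.image e, γ ((fun x : I → ℝ => x i) ⁻¹' sets (e.symm i)))
                = ∏ n ∈ S, γ ((fun x : I → ℝ => x (e n)) ⁻¹' sets n) := by
              rw [Finset.prod_image (fun a _ b _ hab => e.injective hab)]
              simp
            rw [h1, h2] at h
            exact h
          · intro i hi
            rcases Finset.mem_image.1 hi with ⟨n, hn, rfl⟩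
            simpa using hsets n hn
        exact h
      have htail : MeasurableSet[Filter.limsup s Filter.atTop] E := by
        rw [Filter.limsup_eq_iInf_iSup_of_nat, MeasurableSpace.measurableSet_iInf]
        intro n
        set F : Finset I := (Finset.range n).image e with hF
        set T : (I → ℝ) → (I → ℝ) := fun x i => if i ∈ F then 0 else x i with hT
        have hsupp : ∀ x : I → ℝ, {i | (fun i => if i ∈ F then x i else 0) i ≠ 0}.Finite := by
          intro x
          apply Set.Finite.subset F.finite_toSet
          intro i hi
          simp only [Set.mem_setOf_eq] at hi
          by_contra hiF
          exact hi (if_neg hiF)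
        have hTE : T ⁻¹' E = E := by
          ext x
          constructor
          · intro hTx
            have hxeq : x = T x + fun i => if i ∈ F then x i else 0 := by
              funext i
              by_cases hi : i ∈ F <;> simp [hT, hi]
            rw [hxeq]
            exact key _ _ (hsupp x) hTx
          · intro hx
            have hxeq : T x = x + fun i => if i ∈ F then -x i else 0 := by
              funext i
              by_cases hi : i ∈ F <;> simp [hT, hi]
            rw [Set.mem_preimage, hxeq]
            have : {i | (fun i => if i ∈ F then -x i else 0) i ≠ 0}.Finite := by
              apply Set.Finite.subset F.finite_toSet
              intro i hi
              simp only [Set.mem_setOf_eq] at hi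
              by_contra hiF
              exact hi (if_neg hiF)
            exact key _ _ this hx
        have hTmeas : @Measurable _ _ (⨆ m ≥ n, s m) (inferInstance) T := by
          apply aux_meas_lambda (mX := ⨆ m ≥ n, s m)
          intro i
          by_cases hi : i ∈ F
          · simp only [hT, hi, if_pos]
            exact measurable_const
          · simp only [hT, hi, if_neg, not_false_iff]
            have hmn : n ≤ e.symm i := by
              by_contra hlt
              push_neg at hlt
              exact hi (Finset.mem_image.2 ⟨e.symm i, Finset.mem_range.2 hlt,
                e.apply_symm_apply i⟩)
            have hmeas : @Measurable _ _ (s (e.symm i)) _ (fun x : I → ℝ => x i) := by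
              have : (fun x : I → ℝ => x i) = fun x : I → ℝ => x (e (e.symm i)) := by
                simp
              rw [this, hs]
              exact Measurable.of_comap_le le_rfl
            exact hmeas.mono (le_iSup₂ (f := fun m _ => s m) (e.symm i) hmn) le_rfl
        rw [← hTE]
        exact hTmeas hE
      exact measure_zero_or_one_of_measurableSet_limsup_atTop h_le h_indep htail
  refine ⟨?_, h01⟩
  rcases h01 with h0 | h1
  · rw [h0, hac h0]
  · have hc : γ Eᶜ = 0 := by
      rw [measure_compl hE (measure_ne_top _ _), h1, measure_univ, tsub_self]
    have hν : ν Eᶜ = 0 := hac hc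
    rw [h1, prob_compl_eq_zero_iff hE] at *
    rw [hν, h1]
end

section
/- Let (X, 𝔄) be a measurable space, let d be a metric on X, and let κ be a Markov kernel on (X, 𝔄) which is strong Feller with respect to d, i.e. for every bounded 𝔄-measurable G : X → ℝ the map x ↦ ∫ G dκ(x) is continuous from (X,d) to ℝ. Let ν₁ and ν₂ be κ-invariant probability measures on (X, 𝔄) that are mutually singular. Then there exists a set V ∈ 𝔄 which is open in the metric topology of d, such that ν₁(V) = 1 and ν₂(V) = 0. -/
open MeasureTheory ProbabilityTheory
open scoped Topology

/-- a strong Feller (w.r.t. an auxiliary metric `D`) Markov kernel separates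
mutually singular invariant measures by a measurable `D`-open set. -/
theorem strong_feller_disjoint_open_supports {X : Type*} [MeasurableSpace X]
    (D : MetricSpace X)
    (κ : Kernel X X) [IsMarkovKernel κ]
    (hSF : ∀ G : X → ℝ, Measurable G → (∃ M : ℝ, ∀ x, |G x| ≤ M) →
      Continuous[D.toPseudoMetricSpace.toUniformSpace.toTopologicalSpace, inferInstance]
        (fun x => ∫ y, G y ∂(κ x)))
    (ν₁ ν₂ : Measure X) [IsProbabilityMeasure ν₁] [IsProbabilityMeasure ν₂]
    (hinv₁ : ∀ A : Set X, MeasurableSet A → ν₁ A = ∫⁻ x, κ x A ∂ν₁)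
    (hinv₂ : ∀ A : Set X, MeasurableSet A → ν₂ A = ∫⁻ x, κ x A ∂ν₂)
    (hsing : ν₁ ⟂ₘ ν₂) :
    ∃ V : Set X, MeasurableSet V ∧
      IsOpen[D.toPseudoMetricSpace.toUniformSpace.toTopologicalSpace] V ∧
      ν₁ V = 1 ∧ ν₂ V = 0 := by
  obtain ⟨S, hS, hS1, hS2⟩ := hsing
  -- T carries ν₁ fully, ν₂ not at all
  set T : Set X := Sᶜ with hTdef
  have hT : MeasurableSet T := hS.compl
  have hT1 : ν₁ T = 1 := by
    have := prob_compl_eq_one_sub hS (μ := ν₁)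
    rw [this, hS1]; simp
  have hT2 : ν₂ T = 0 := hS2
  -- the function f x = κ x T
  set f : X → ℝ := fun x => ∫ y, T.indicator (fun _ => (1:ℝ)) y ∂(κ x) with hfdef
  have hfeq : ∀ x, f x = (κ x T).toReal := by
    intro x
    show ∫ y, T.indicator (fun _ => (1:ℝ)) y ∂(κ x) = (κ x T).toReal
    exact integral_indicator_one hT
  have hG : Measurable (T.indicator (fun _ => (1:ℝ))) :=
    (measurable_const).indicator hT
  have hGbdd : ∃ M : ℝ, ∀ x, |T.indicator (fun _ => (1:ℝ)) x| ≤ M := by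
    refine ⟨1, fun x => ?_⟩
    by_cases hx : x ∈ T <;> simp [Set.indicator, hx]
  have hfcont := hSF _ hG hGbdd
  have hfmeas : Measurable f := by
    have : Measurable fun x => κ x T := κ.measurable_coe hT
    have h : Measurable fun x => (κ x T).toReal := this.ennreal_toReal
    simpa [funext hfeq] using h
  -- a.e. ν₂, κ x T = 0
  have hae2 : ∀ᵐ x ∂ν₂, κ x T = 0 := by
    have : ∫⁻ x, κ x T ∂ν₂ = 0 := by rw [← hinv₂ T hT, hT2]
    exact (lintegral_eq_zero_iff (κ.measurable_coe hT)).mp this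
  -- a.e. ν₁, κ x T = 1
  have hae1 : ∀ᵐ x ∂ν₁, κ x T = 1 := by
    have hle : ∀ x, κ x T ≤ 1 := fun x => prob_le_one
    have hint : ∫⁻ x, κ x T ∂ν₁ = ∫⁻ x, (1:ENNReal) ∂ν₁ := by
      rw [← hinv₁ T hT, hT1]; simp
    have hne : ∫⁻ x, κ x T ∂ν₁ ≠ ⊤ := by rw [hint]; simp
    exact ae_eq_of_ae_le_of_lintegral_le (ae_of_all _ hle) hne
      aemeasurable_const (le_of_eq hint.symm)
  refine ⟨f ⁻¹' Set.Ioi 0, hfmeas measurableSet_Ioi, ?_, ?_, ?_⟩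
  · exact hfcont.isOpen_preimage _ isOpen_Ioi
  · have hsub : ∀ᵐ x ∂ν₁, x ∈ f ⁻¹' Set.Ioi 0 := by
      filter_upwards [hae1] with x hx
      simp [Set.mem_preimage, hfeq x, hx]
    rw [← prob_compl_eq_zero_iff (hfmeas measurableSet_Ioi)]
    have hc : (f ⁻¹' Set.Ioi 0)ᶜ = {a | f a ≤ 0} := by ext a; simp
    rw [hc]
    simpa [ae_iff, not_lt] using hsub
  · have hsub : ∀ᵐ x ∂ν₂, x ∉ f ⁻¹' Set.Ioi 0 := by
      filter_upwards [hae2] with x hx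
      simp [Set.mem_preimage, hfeq x, hx]
    exact (by simpa [ae_iff] using hsub : ν₂ {a | 0 < f a} = 0)
end

section
/- Let (X, d) be a metric space with its Borel σ-algebra, and for each t ≥ 0 let κ_t be a Markov kernel on X. Let μ be a probability measure on X that is κ_t-invariant for every t ≥ 0. Assume that for every bounded Lipschitz function F : X → ℝ, all x, y ∈ X and all t ≥ 0: |∫ F dκ_t(x) − ∫ F dκ_t(y)| ≤ min( e^{−t/8} · Lip(F) · d(x,y), 2·sup|F| ). Then: (i) for every x ∈ X, the measures κ_t(x) converge weakly to μ as t → ∞ (i.e. ∫ F dκ_t(x) → ∫ F dμ for every bounded continuous F : X → ℝ); and (ii) if ν is a probability measure on X that is κ_t-invariant for every t ≥ 0, then ν = μ. -/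
open MeasureTheory ProbabilityTheory Filter
open scoped Topology NNReal

/-- Integrability of a bounded a.e.-strongly-measurable function w.r.t. a finite measure. -/
lemma aux_integrable_of_abs_le {X : Type*} [MeasurableSpace X] (m : Measure X)
    [IsFiniteMeasure m] {f : X → ℝ} (hf : AEStronglyMeasurable f m) {M : ℝ}
    (hb : ∀ z, |f z| ≤ M) : Integrable f m :=
  (integrable_const M).mono' hf (Filter.Eventually.of_forall fun z => by
    simpa [Real.norm_eq_abs] using hb z)

/-- Invariance of a measure under a Markov kernel upgrades from sets to integrals of bounded
measurable functions (with measurable kernel-integral). -/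
lemma aux_kernel_invariant_integral {X : Type*} [MeasurableSpace X]
    (κ' : Kernel X X) [IsMarkovKernel κ'] (m : Measure X) [IsProbabilityMeasure m]
    (hbind : ∀ A : Set X, MeasurableSet A → m A = ∫⁻ x, κ' x A ∂m)
    {F : X → ℝ} (hFm : Measurable F) {M : ℝ} (hb : ∀ z, |F z| ≤ M)
    (hg : Measurable fun y => ∫ z, F z ∂κ' y) :
    ∫ y, ∫ z, F z ∂κ' y ∂m = ∫ z, F z ∂m := by
  have hbind' : m.bind κ' = m := by
    refine Measure.ext fun A hA => ?_
    rw [Measure.bind_apply hA (κ'.measurable.aemeasurable)]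
    exact (hbind A hA).symm
  set G : X → ℝ := fun z => F z + M with hGdef
  have hGm : Measurable G := hFm.add_const M
  have hGnn : ∀ z, 0 ≤ G z := fun z => by
    have := (abs_le.mp (hb z)).1; simp only [hGdef]; linarith
  have hGle : ∀ z, G z ≤ M + M := fun z => by
    have := (abs_le.mp (hb z)).2; simp only [hGdef]; linarith
  have key : ∀ (p : Measure X), ∫ z, G z ∂p = (∫⁻ z, ENNReal.ofReal (G z) ∂p).toReal := fun p =>
    integral_eq_lintegral_of_nonneg_ae (Filter.Eventually.of_forall hGnn)
      hGm.aestronglyMeasurable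
  have hlt : ∀ y, ∫⁻ z, ENNReal.ofReal (G z) ∂κ' y ≤ ENNReal.ofReal (M + M) := by
    intro y
    calc ∫⁻ z, ENNReal.ofReal (G z) ∂κ' y
        ≤ ∫⁻ _, ENNReal.ofReal (M + M) ∂κ' y :=
          lintegral_mono fun z => ENNReal.ofReal_le_ofReal (hGle z)
      _ = ENNReal.ofReal (M + M) := by simp
  have hmeasl : Measurable fun y => ∫⁻ z, ENNReal.ofReal (G z) ∂κ' y :=
    Measurable.lintegral_kernel hGm.ennreal_ofReal
  have hGkernel : ∫ y, ∫ z, G z ∂κ' y ∂m = ∫ z, G z ∂m := by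
    calc ∫ y, ∫ z, G z ∂κ' y ∂m
        = ∫ y, (∫⁻ z, ENNReal.ofReal (G z) ∂κ' y).toReal ∂m := by simp_rw [key]
      _ = (∫⁻ y, ∫⁻ z, ENNReal.ofReal (G z) ∂κ' y ∂m).toReal :=
          integral_toReal hmeasl.aemeasurable
            (Filter.Eventually.of_forall fun y =>
              lt_of_le_of_lt (hlt y) ENNReal.ofReal_lt_top)
      _ = (∫⁻ z, ENNReal.ofReal (G z) ∂(m.bind κ')).toReal := by
          rw [Measure.lintegral_bind κ'.measurable.aemeasurable hGm.ennreal_ofReal.aemeasurable]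
      _ = ∫ z, G z ∂m := by rw [hbind', ← key]
  have hFintk : ∀ y : X, Integrable F (κ' y) := fun y =>
    aux_integrable_of_abs_le _ hFm.aestronglyMeasurable hb
  have hFint : Integrable F m := aux_integrable_of_abs_le _ hFm.aestronglyMeasurable hb
  have expand : ∀ y, ∫ z, G z ∂κ' y = (∫ z, F z ∂κ' y) + M := by
    intro y
    simp only [hGdef]
    rw [integral_add (hFintk y) (integrable_const M)]
    simp
  have hgb : ∀ y, |∫ z, F z ∂κ' y| ≤ M := by
    intro y
    calc |∫ z, F z ∂κ' y| ≤ ∫ z, |F z| ∂κ' y := by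
          simpa [Real.norm_eq_abs] using norm_integral_le_integral_norm (μ := κ' y) F
      _ ≤ ∫ _, M ∂κ' y := integral_mono (hFintk y).abs (integrable_const M) hb
      _ = M := by simp
  have hgint : Integrable (fun y => ∫ z, F z ∂κ' y) m :=
    aux_integrable_of_abs_le _ hg.aestronglyMeasurable hgb
  have lhs : ∫ y, ∫ z, G z ∂κ' y ∂m = (∫ y, ∫ z, F z ∂κ' y ∂m) + M := by
    calc ∫ y, ∫ z, G z ∂κ' y ∂m = ∫ y, ((∫ z, F z ∂κ' y) + M) ∂m := by simp_rw [expand]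
      _ = (∫ y, ∫ z, F z ∂κ' y ∂m) + M := by
          rw [integral_add hgint (integrable_const M)]; simp
  have rhs : ∫ z, G z ∂m = (∫ z, F z ∂m) + M := by
    simp only [hGdef]
    rw [integral_add hFint (integrable_const M)]
    simp
  have := hGkernel
  rw [lhs, rhs] at this
  linarith

/-- a family of Markov kernels contracting bounded Lipschitz functions at rate
`e^{−t/8}` has `μ` as unique invariant measure, and `κ_t(x) → μ` weakly for every `x`. -/
theorem exponential_contraction_unique_ergodicity
    {X : Type*} [MetricSpace X] [MeasurableSpace X] [BorelSpace X]
    (κ : ℝ → Kernel X X) (hκ : ∀ t, IsMarkovKernel (κ t))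
    (μ : Measure X) [IsProbabilityMeasure μ]
    (hinv : ∀ t : ℝ, 0 ≤ t → ∀ A : Set X, MeasurableSet A → μ A = ∫⁻ x, κ t x A ∂μ)
    (hcontr : ∀ (F : X → ℝ) (K : ℝ≥0) (M : ℝ), LipschitzWith K F → (∀ x, |F x| ≤ M) →
      ∀ x y : X, ∀ t : ℝ, 0 ≤ t →
        |(∫ z, F z ∂(κ t x)) - ∫ z, F z ∂(κ t y)| ≤
          min (Real.exp (-t / 8) * K * dist x y) (2 * M)) :
    (∀ x : X, ∀ F : X → ℝ, Continuous F → (∃ M : ℝ, ∀ z, |F z| ≤ M) →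
      Tendsto (fun t : ℝ => ∫ z, F z ∂(κ t x)) atTop (𝓝 (∫ z, F z ∂μ))) ∧
    (∀ ν : Measure X, IsProbabilityMeasure ν →
      (∀ t : ℝ, 0 ≤ t → ∀ A : Set X, MeasurableSet A → ν A = ∫⁻ x, κ t x A ∂ν) → ν = μ) := by
  haveI : ∀ t, IsMarkovKernel (κ t) := hκ
  -- X is nonempty since it carries a probability measure
  have hne : Nonempty X := by
    by_contra h
    rw [not_nonempty_iff] at h
    have h1 : μ Set.univ = 1 := measure_univ
    rw [Set.univ_eq_empty_iff.mpr h] at h1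
    simp at h1
  obtain ⟨x₀⟩ := hne
  -- exp(-t/8) → 0
  have hexp : Tendsto (fun t : ℝ => Real.exp (-t / 8)) atTop (𝓝 0) := by
    have h8 : Tendsto (fun t : ℝ => -t / 8) atTop atBot :=
      (tendsto_neg_atTop_atBot).atBot_div_const (by norm_num)
    exact Real.tendsto_exp_atBot.comp h8
  -- the "error integral" tends to 0
  have hB : ∀ (c : ℝ≥0) (M : ℝ), 0 ≤ M → ∀ (p : Measure X), IsProbabilityMeasure p → ∀ x : X,
      Tendsto (fun t : ℝ => ∫ y, min (Real.exp (-t / 8) * c * dist x y) (2 * M) ∂p)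
        atTop (𝓝 0) := by
    intro c M hM p hp x
    have h0 : (0 : ℝ) = ∫ (_ : X), (0 : ℝ) ∂p := by simp
    rw [h0]
    apply tendsto_integral_filter_of_dominated_convergence (bound := fun _ => 2 * M)
    · refine Filter.Eventually.of_forall fun t => ?_
      exact ((((continuous_const.mul (continuous_const.dist continuous_id)).min
        continuous_const)).aestronglyMeasurable)
    · refine Filter.Eventually.of_forall fun t => Filter.Eventually.of_forall fun y => ?_
      have h1 : 0 ≤ Real.exp (-t / 8) * c * dist x y := by positivity
      rw [Real.norm_eq_abs, abs_le]
      constructor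
      · have : (0:ℝ) ≤ min (Real.exp (-t / 8) * c * dist x y) (2 * M) :=
          le_min h1 (by linarith)
        linarith
      · exact min_le_right _ _
    · exact integrable_const _
    · refine Filter.Eventually.of_forall fun y => ?_
      have h1 : Tendsto (fun t : ℝ => Real.exp (-t / 8) * c * dist x y) atTop (𝓝 0) := by
        have := (hexp.mul_const (c : ℝ)).mul_const (dist x y)
        simpa using this
      have h2 := h1.min (tendsto_const_nhds (x := (2 * M : ℝ)) (f := atTop))
      rw [min_eq_left (by linarith)] at h2
      exact h2
  -- integrability of the min function
  have hminint : ∀ (t : ℝ) (c : ℝ≥0) (M : ℝ) (x : X) (p : Measure X), IsProbabilityMeasure p →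
      Integrable (fun y => min (Real.exp (-t / 8) * c * dist x y) (2 * M)) p := by
    intro t c M x p hp
    refine aux_integrable_of_abs_le p ?_ (M := |2 * M|) fun y => ?_
    · exact (((continuous_const.mul (continuous_const.dist continuous_id)).min
        continuous_const)).aestronglyMeasurable
    · have h1 : 0 ≤ Real.exp (-t / 8) * c * dist x y := by positivity
      rw [abs_le]
      refine ⟨?_, le_trans (min_le_right _ _) (le_abs_self _)⟩
      refine le_min ?_ (neg_abs_le _)
      have := abs_nonneg (2 * M)
      linarith
  -- Lemma A : convergence of kernel integrals for bounded Lipschitz functions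
  have lemA : ∀ (F : X → ℝ) (K : ℝ≥0) (M : ℝ), LipschitzWith K F → (∀ z, |F z| ≤ M) →
      ∀ x : X, Tendsto (fun t : ℝ => ∫ z, F z ∂(κ t x)) atTop (𝓝 (∫ z, F z ∂μ)) := by
    intro F K M hK hM x
    have hM0 : 0 ≤ M := le_trans (abs_nonneg _) (hM x₀)
    have hFc : Continuous F := hK.continuous
    set g : ℝ → X → ℝ := fun t y => ∫ z, F z ∂κ t y with hgdef
    have hgcont : ∀ t : ℝ, 0 ≤ t → Continuous (g t) := by
      intro t ht
      refine (LipschitzWith.of_dist_le_mul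
        (K := Real.toNNReal (Real.exp (-t / 8) * K)) (f := g t) fun a b => ?_).continuous
      have h1 := hcontr F K M hK hM a b t ht
      have h2 : |g t a - g t b| ≤ Real.exp (-t / 8) * K * dist a b :=
        le_trans h1 (min_le_left _ _)
      rw [Real.dist_eq]
      refine le_trans h2 ?_
      rw [Real.coe_toNNReal']
      exact mul_le_mul_of_nonneg_right (le_max_left _ _) dist_nonneg
    have hgb : ∀ t (y : X), |g t y| ≤ M := by
      intro t y
      calc |g t y| ≤ ∫ z, |F z| ∂κ t y := by
            simpa [Real.norm_eq_abs] using norm_integral_le_integral_norm (μ := κ t y) F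
        _ ≤ ∫ _, M ∂κ t y :=
            integral_mono
              ((aux_integrable_of_abs_le _ hFc.measurable.aestronglyMeasurable hM).abs)
              (integrable_const M) hM
        _ = M := by simp
    have hinvint : ∀ t : ℝ, 0 ≤ t → ∫ y, g t y ∂μ = ∫ z, F z ∂μ := fun t ht =>
      aux_kernel_invariant_integral (κ t) μ (hinv t ht) hFc.measurable hM
        ((hgcont t ht).measurable)
    have hbound : ∀ t : ℝ, 0 ≤ t → |g t x - ∫ z, F z ∂μ| ≤
        ∫ y, min (Real.exp (-t / 8) * K * dist x y) (2 * M) ∂μ := by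
      intro t ht
      have hgint : Integrable (g t) μ :=
        aux_integrable_of_abs_le _ (hgcont t ht).measurable.aestronglyMeasurable (hgb t)
      have hsub : g t x - ∫ z, F z ∂μ = ∫ y, (g t x - g t y) ∂μ := by
        rw [← hinvint t ht, integral_sub (integrable_const _) hgint]
        simp
      rw [hsub]
      calc |∫ y, (g t x - g t y) ∂μ| ≤ ∫ y, |g t x - g t y| ∂μ := by
            simpa [Real.norm_eq_abs] using
              norm_integral_le_integral_norm (μ := μ) (fun y => g t x - g t y)
        _ ≤ ∫ y, min (Real.exp (-t / 8) * K * dist x y) (2 * M) ∂μ := by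
            refine integral_mono ((integrable_const (g t x)).sub hgint).abs
              (hminint t K M x μ inferInstance) fun y => ?_
            exact hcontr F K M hK hM x y t ht
    have habs : Tendsto (fun t : ℝ => |g t x - ∫ z, F z ∂μ|) atTop (𝓝 0) := by
      refine squeeze_zero' (Filter.Eventually.of_forall fun t => abs_nonneg _)
        ?_ (hB K M hM0 μ inferInstance x)
      filter_upwards [eventually_ge_atTop (0 : ℝ)] with t ht
      exact hbound t ht
    rw [tendsto_iff_dist_tendsto_zero]
    simpa [Real.dist_eq] using habs
  -- Lemma B : invariant measures integrate bounded Lipschitz functions like μ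
  have lemB : ∀ (ν : Measure X), IsProbabilityMeasure ν →
      (∀ t : ℝ, 0 ≤ t → ∀ A : Set X, MeasurableSet A → ν A = ∫⁻ x, κ t x A ∂ν) →
      ∀ (F : X → ℝ) (K : ℝ≥0) (M : ℝ), LipschitzWith K F → (∀ z, |F z| ≤ M) →
      ∫ z, F z ∂ν = ∫ z, F z ∂μ := by
    intro ν hν hinvν F K M hK hM
    have hM0 : 0 ≤ M := le_trans (abs_nonneg _) (hM x₀)
    have hFc : Continuous F := hK.continuous
    set g : ℝ → X → ℝ := fun t y => ∫ z, F z ∂κ t y with hgdef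
    have hgcont : ∀ t : ℝ, 0 ≤ t → Continuous (g t) := by
      intro t ht
      refine (LipschitzWith.of_dist_le_mul
        (K := Real.toNNReal (Real.exp (-t / 8) * K)) (f := g t) fun a b => ?_).continuous
      have h2 : |g t a - g t b| ≤ Real.exp (-t / 8) * K * dist a b :=
        le_trans (hcontr F K M hK hM a b t ht) (min_le_left _ _)
      rw [Real.dist_eq]
      refine le_trans h2 ?_
      rw [Real.coe_toNNReal']
      exact mul_le_mul_of_nonneg_right (le_max_left _ _) dist_nonneg
    have hgb : ∀ t (y : X), |g t y| ≤ M := by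
      intro t y
      calc |g t y| ≤ ∫ z, |F z| ∂κ t y := by
            simpa [Real.norm_eq_abs] using norm_integral_le_integral_norm (μ := κ t y) F
        _ ≤ ∫ _, M ∂κ t y :=
            integral_mono
              ((aux_integrable_of_abs_le _ hFc.measurable.aestronglyMeasurable hM).abs)
              (integrable_const M) hM
        _ = M := by simp
    -- the distance-to-x₀ error bound, for any invariant probability measure
    have key : ∀ (p : Measure X), IsProbabilityMeasure p →
        (∀ t : ℝ, 0 ≤ t → ∀ A : Set X, MeasurableSet A → p A = ∫⁻ x, κ t x A ∂p) →
        ∀ t : ℝ, 0 ≤ t → |(∫ z, F z ∂p) - g t x₀| ≤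
          ∫ y, min (Real.exp (-t / 8) * K * dist x₀ y) (2 * M) ∂p := by
      intro p hp hinvp t ht
      have hgint : Integrable (g t) p :=
        aux_integrable_of_abs_le _ (hgcont t ht).measurable.aestronglyMeasurable (hgb t)
      have hinvint : ∫ y, g t y ∂p = ∫ z, F z ∂p :=
        aux_kernel_invariant_integral (κ t) p (hinvp t ht) hFc.measurable hM
          ((hgcont t ht).measurable)
      have hsub : (∫ z, F z ∂p) - g t x₀ = ∫ y, (g t y - g t x₀) ∂p := by
        rw [← hinvint, integral_sub hgint (integrable_const _)]
        simp
      rw [hsub]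
      calc |∫ y, (g t y - g t x₀) ∂p| ≤ ∫ y, |g t y - g t x₀| ∂p := by
            simpa [Real.norm_eq_abs] using
              norm_integral_le_integral_norm (μ := p) (fun y => g t y - g t x₀)
        _ ≤ ∫ y, min (Real.exp (-t / 8) * K * dist x₀ y) (2 * M) ∂p := by
            refine integral_mono (hgint.sub (integrable_const (g t x₀))).abs
              (hminint t K M x₀ p hp) fun y => ?_
            rw [abs_sub_comm]
            exact hcontr F K M hK hM x₀ y t ht
    have hb1 := hB K M hM0 ν hν x₀
    have hb2 := hB K M hM0 μ inferInstance x₀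
    have hfin : |(∫ z, F z ∂ν) - ∫ z, F z ∂μ| ≤ 0 := by
      have hb12 := hb1.add hb2
      rw [add_zero] at hb12
      refine ge_of_tendsto hb12 ?_
      filter_upwards [eventually_ge_atTop (0 : ℝ)] with t ht
      calc |(∫ z, F z ∂ν) - ∫ z, F z ∂μ|
          ≤ |(∫ z, F z ∂ν) - g t x₀| + |(∫ z, F z ∂μ) - g t x₀| := by
            have h3 := abs_sub_le (∫ z, F z ∂ν) (g t x₀) (∫ z, F z ∂μ)
            rwa [abs_sub_comm (g t x₀)] at h3
        _ ≤ _ := add_le_add (key ν hν hinvν t ht) (key μ inferInstance hinv t ht)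
    have := abs_nonneg ((∫ z, F z ∂ν) - ∫ z, F z ∂μ)
    have h0 : |(∫ z, F z ∂ν) - ∫ z, F z ∂μ| = 0 := le_antisymm hfin this
    have := abs_eq_zero.mp h0
    linarith
  -- Lipschitz approximations to indicators of closed sets
  set fC : Set X → ℕ → X → ℝ := fun C k z => max (1 - (k : ℝ) * Metric.infDist z C) 0 with hfCdef
  have hfC_lip : ∀ (C : Set X) (k : ℕ), LipschitzWith (k : ℝ≥0) (fC C k) := by
    intro C k
    refine LipschitzWith.of_dist_le_mul fun a b => ?_
    rw [Real.dist_eq]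
    have h1 : |fC C k a - fC C k b| ≤
        |(1 - (k : ℝ) * Metric.infDist a C) - (1 - (k : ℝ) * Metric.infDist b C)| :=
      abs_max_sub_max_le_abs _ _ _
    have h2 : |(1 - (k : ℝ) * Metric.infDist a C) - (1 - (k : ℝ) * Metric.infDist b C)| =
        (k : ℝ) * |Metric.infDist a C - Metric.infDist b C| := by
      have e1 : (1 - (k : ℝ) * Metric.infDist a C) - (1 - (k : ℝ) * Metric.infDist b C) =
          (k : ℝ) * (Metric.infDist b C - Metric.infDist a C) := by ring
      rw [e1, abs_mul, abs_of_nonneg (Nat.cast_nonneg k), abs_sub_comm]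
    have h3 : |Metric.infDist a C - Metric.infDist b C| ≤ dist a b := by
      have h4 := (Metric.lipschitz_infDist_pt C).dist_le_mul a b
      rwa [Real.dist_eq, NNReal.coe_one, one_mul] at h4
    calc |fC C k a - fC C k b| ≤ (k : ℝ) * |Metric.infDist a C - Metric.infDist b C| :=
          h1.trans (le_of_eq h2)
      _ ≤ (k : ℝ) * dist a b := mul_le_mul_of_nonneg_left h3 (Nat.cast_nonneg k)
      _ = ((k : ℝ≥0) : ℝ) * dist a b := by push_cast; ring
  have hfC_nn : ∀ C k (z : X), 0 ≤ fC C k z := fun C k z => le_max_right _ _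
  have hfC_le1 : ∀ C k (z : X), fC C k z ≤ 1 := by
    intro C k z
    refine max_le ?_ zero_le_one
    have : 0 ≤ (k : ℝ) * Metric.infDist z C := by
      have := Metric.infDist_nonneg (x := z) (s := C); positivity
    linarith
  have hfC_abs : ∀ C k (z : X), |fC C k z| ≤ 1 := fun C k z =>
    abs_le.mpr ⟨by linarith [hfC_nn C k z], hfC_le1 C k z⟩
  have hfC_one : ∀ C k (z : X), z ∈ C → fC C k z = 1 := by
    intro C k z hz
    simp [hfCdef, Metric.infDist_zero_of_mem hz]
  have hfC_int : ∀ C k (p : Measure X), IsProbabilityMeasure p → Integrable (fC C k) p := by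
    intro C k p hp
    exact aux_integrable_of_abs_le p
      (hfC_lip C k).continuous.measurable.aestronglyMeasurable (hfC_abs C k)
  have hfC_tendsto : ∀ (C : Set X), IsClosed C → C.Nonempty → ∀ z : X,
      Tendsto (fun k : ℕ => fC C k z) atTop (𝓝 (C.indicator (fun _ => (1:ℝ)) z)) := by
    intro C hC hCne z
    by_cases hz : z ∈ C
    · have h1 : (fun k : ℕ => fC C k z) = fun _ => (1 : ℝ) := funext fun k => hfC_one C k z hz
      rw [h1, Set.indicator_of_mem hz]
      exact tendsto_const_nhds
    · rw [Set.indicator_of_notMem hz]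
      have hd : 0 < Metric.infDist z C := (hC.notMem_iff_infDist_pos hCne).mp hz
      refine Tendsto.congr' ?_ (tendsto_const_nhds (x := (0 : ℝ)))
      filter_upwards [eventually_ge_atTop ⌈(Metric.infDist z C)⁻¹⌉₊] with k hk
      have h5 : (Metric.infDist z C)⁻¹ ≤ (k : ℝ) := (Nat.le_ceil _).trans (Nat.cast_le.mpr hk)
      have h6 : 1 ≤ (k : ℝ) * Metric.infDist z C := by
        have := mul_le_mul_of_nonneg_right h5 hd.le
        rwa [inv_mul_cancel₀ hd.ne'] at this
      simp only [hfCdef]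
      rw [max_eq_right (by linarith)]
  have hfC_lb : ∀ (C : Set X), IsClosed C → ∀ k (p : Measure X), IsProbabilityMeasure p →
      (p C).toReal ≤ ∫ z, fC C k z ∂p := by
    intro C hC k p hp
    have h0 : (p C).toReal = ∫ z, C.indicator (fun _ => (1:ℝ)) z ∂p := by
      simpa [measureReal_def, Pi.one_def] using (integral_indicator_one (μ := p) hC.measurableSet).symm
    rw [h0]
    refine integral_mono ((integrable_const (1:ℝ)).indicator hC.measurableSet)
      (hfC_int C k p hp) fun z => ?_
    by_cases hz : z ∈ C
    · rw [Set.indicator_of_mem hz, hfC_one C k z hz]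
    · rw [Set.indicator_of_notMem hz]; exact hfC_nn C k z
  have hfC_intlim : ∀ (C : Set X), IsClosed C → C.Nonempty → ∀ (p : Measure X),
      IsProbabilityMeasure p →
      Tendsto (fun k : ℕ => ∫ z, fC C k z ∂p) atTop (𝓝 ((p C).toReal)) := by
    intro C hC hCne p hp
    have h0 : ∫ z, C.indicator (fun _ => (1:ℝ)) z ∂p = (p C).toReal := by
      simpa [measureReal_def, Pi.one_def] using integral_indicator_one (μ := p) hC.measurableSet
    rw [← h0]
    apply tendsto_integral_filter_of_dominated_convergence (bound := fun _ => (1:ℝ))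
    · exact Filter.Eventually.of_forall fun k =>
        (hfC_lip C k).continuous.measurable.aestronglyMeasurable
    · exact Filter.Eventually.of_forall fun k => Filter.Eventually.of_forall fun z => by
        simpa [Real.norm_eq_abs] using hfC_abs C k z
    · exact integrable_const _
    · exact Filter.Eventually.of_forall fun z => hfC_tendsto C hC hCne z
  constructor
  · -- weak convergence of κ t x towards μ
    intro x F hFc hMex
    obtain ⟨M, hM⟩ := hMex
    set f : BoundedContinuousFunction X ℝ := BoundedContinuousFunction.ofNormedAddCommGroup F hFc M
      (fun z => by simpa [Real.norm_eq_abs] using hM z) with hfdef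
    rw [Filter.tendsto_iff_seq_tendsto]
    intro ts hts
    haveI : ∀ n : ℕ, IsProbabilityMeasure ((κ (ts n)) x) := fun n => inferInstance
    have hcls : ∀ C : Set X, IsClosed C →
        atTop.limsup (fun n : ℕ => (κ (ts n) x) C) ≤ μ C := by
      intro C hC
      rcases C.eq_empty_or_nonempty with rfl | hCne
      · simp only [measure_empty]
        rw [limsup_const]
      · have hstep : ∀ k : ℕ, atTop.limsup (fun n : ℕ => (κ (ts n) x) C) ≤
            ENNReal.ofReal (∫ z, fC C k z ∂μ) := by
          intro k
          have hA := (lemA (fC C k) (k : ℝ≥0) 1 (hfC_lip C k) (hfC_abs C k) x).comp hts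
          have hlim : Tendsto (fun n : ℕ => ENNReal.ofReal (∫ z, fC C k z ∂(κ (ts n) x)))
              atTop (𝓝 (ENNReal.ofReal (∫ z, fC C k z ∂μ))) :=
            (ENNReal.continuous_ofReal.tendsto _).comp hA
          have hklb : ∀ n : ℕ, (κ (ts n) x) C ≤
              ENNReal.ofReal (∫ z, fC C k z ∂(κ (ts n) x)) := by
            intro n
            have h5 := hfC_lb C hC k (κ (ts n) x) inferInstance
            calc (κ (ts n) x) C = ENNReal.ofReal (((κ (ts n) x) C).toReal) :=
                  (ENNReal.ofReal_toReal (measure_ne_top _ _)).symm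
              _ ≤ _ := ENNReal.ofReal_le_ofReal h5
          calc atTop.limsup (fun n : ℕ => (κ (ts n) x) C)
              ≤ atTop.limsup (fun n : ℕ => ENNReal.ofReal (∫ z, fC C k z ∂(κ (ts n) x))) :=
                limsup_le_limsup (Filter.Eventually.of_forall hklb)
            _ = ENNReal.ofReal (∫ z, fC C k z ∂μ) := hlim.limsup_eq
        have hμlim : Tendsto (fun k : ℕ => ENNReal.ofReal (∫ z, fC C k z ∂μ)) atTop
            (𝓝 (μ C)) := by
          have h7 := (ENNReal.continuous_ofReal.tendsto _).comp
            (hfC_intlim C hC hCne μ inferInstance)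
          rwa [Function.comp_def, ENNReal.ofReal_toReal (measure_ne_top μ C)] at h7
        exact ge_of_tendsto' hμlim hstep
    have key : Tendsto (fun n : ℕ => ∫ z, f z ∂(κ (ts n) x)) atTop (𝓝 (∫ z, f z ∂μ)) := by
      apply BoundedContinuousFunction.tendsto_integral_of_forall_integral_le_liminf_integral
      intro g hg
      refine integral_le_liminf_integral_of_forall_isOpen_measure_le_liminf_measure hg ?_
      intro G hG
      exact le_measure_liminf_of_limsup_measure_compl_le hG.measurableSet
        (hcls Gᶜ hG.isClosed_compl)
    exact key
  · -- uniqueness of the invariant measure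
    intro ν hν hinvν
    have hclosed : ∀ C : Set X, IsClosed C → ν C = μ C := by
      intro C hC
      rcases C.eq_empty_or_nonempty with rfl | hCne
      · simp
      · have h1 := hfC_intlim C hC hCne ν hν
        have h2 := hfC_intlim C hC hCne μ inferInstance
        have heq : (fun k : ℕ => ∫ z, fC C k z ∂ν) = fun k : ℕ => ∫ z, fC C k z ∂μ :=
          funext fun k => lemB ν hν hinvν (fC C k) (k : ℝ≥0) 1 (hfC_lip C k) (hfC_abs C k)
        rw [heq] at h1
        have h3 : (ν C).toReal = (μ C).toReal := tendsto_nhds_unique h1 h2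
        exact (ENNReal.toReal_eq_toReal_iff' (measure_ne_top _ _) (measure_ne_top _ _)).mp h3
    refine MeasureTheory.ext_of_generate_finite {s : Set X | IsClosed s} ?_
      isPiSystem_isClosed (fun s hs => hclosed s hs) ?_
    · rw [BorelSpace.measurable_eq (α := X), borel_eq_generateFrom_isClosed]
    · simp
end

section
/- Let κ be a Markov kernel on a measurable space (X, 𝔄) and let ρ and ν be two distinct κ-invariant probability measures. Then the Jordan decomposition positive parts satisfy (ρ − ν)₊(X) > 0 and (ν − ρ)₊(X) > 0, and the normalized measures ρ₁ := (ρ − ν)₊ / (ρ − ν)₊(X) and ρ₂ := (ν − ρ)₊ / (ν − ρ)₊(X) are κ-invariant probability measures which are mutually singular. -/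
open MeasureTheory ProbabilityTheory

noncomputable section

/-- The positive part `(ρ − ν)₊` of the Jordan decomposition of the signed measure `ρ − ν`. -/
def jordanPos {X : Type*} [MeasurableSpace X] (ρ ν : Measure X)
    [IsFiniteMeasure ρ] [IsFiniteMeasure ν] : Measure X :=
  ((ρ.toSignedMeasure - ν.toSignedMeasure).toJordanDecomposition).posPart

instance jordanPos_finite {X : Type*} [MeasurableSpace X] (ρ ν : Measure X)
    [IsFiniteMeasure ρ] [IsFiniteMeasure ν] : IsFiniteMeasure (jordanPos ρ ν) :=
  ((ρ.toSignedMeasure - ν.toSignedMeasure).toJordanDecomposition).posPart_finite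

section Aux

variable {X : Type*} [MeasurableSpace X]

/-- `ρ + (ρ - ν)₋ = ν + (ρ - ν)₊`. -/
lemma jordan_sum_eq (ρ ν : Measure X) [IsFiniteMeasure ρ] [IsFiniteMeasure ν] :
    ρ + (ρ.toSignedMeasure - ν.toSignedMeasure).toJordanDecomposition.negPart
      = ν + jordanPos ρ ν := by
  set s := ρ.toSignedMeasure - ν.toSignedMeasure with hs
  rw [show jordanPos ρ ν = s.toJordanDecomposition.posPart from rfl]
  set p := s.toJordanDecomposition.posPart with hp
  set n := s.toJordanDecomposition.negPart with hn
  ext A hA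
  have h1 : s A = (ρ A).toReal - (ν A).toReal := Measure.toSignedMeasure_sub_apply hA
  have h2 : s A = (p A).toReal - (n A).toReal := by
    conv_lhs => rw [← s.toSignedMeasure_toJordanDecomposition]
    exact Measure.toSignedMeasure_sub_apply hA
  have fρ : ρ A ≠ ⊤ := measure_ne_top _ _
  have fν : ν A ≠ ⊤ := measure_ne_top _ _
  have fp : p A ≠ ⊤ := measure_ne_top _ _
  have fn : n A ≠ ⊤ := measure_ne_top _ _
  rw [Measure.add_apply, Measure.add_apply,
    ← ENNReal.toReal_eq_toReal_iff' (by simp [fρ, fn]) (by simp [fν, fp]),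
    ENNReal.toReal_add fρ fn, ENNReal.toReal_add fν fp]
  linarith

/-- The key invariance lemma: `(ρ - ν)₊` is `κ`-invariant. -/
lemma jordanPos_invariant (κ : Kernel X X) [IsMarkovKernel κ]
    (ρ ν : Measure X) [IsProbabilityMeasure ρ] [IsProbabilityMeasure ν]
    (hρ : ∀ A : Set X, MeasurableSet A → ρ A = ∫⁻ x, κ x A ∂ρ)
    (hν : ∀ A : Set X, MeasurableSet A → ν A = ∫⁻ x, κ x A ∂ν)
    (A : Set X) (hA : MeasurableSet A) :
    jordanPos ρ ν A = ∫⁻ x, κ x A ∂(jordanPos ρ ν) := by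
  set s := ρ.toSignedMeasure - ν.toSignedMeasure with hs
  set p := jordanPos ρ ν with hpdef
  set n := s.toJordanDecomposition.negPart with hn
  have hpp : p = s.toJordanDecomposition.posPart := rfl
  have hPN : ρ + n = ν + p := jordan_sum_eq ρ ν
  -- finiteness of the kernel integrals
  have hint : ∀ (μ : Measure X) [IsFiniteMeasure μ] (B : Set X),
      ∫⁻ x, κ x B ∂μ ≠ ⊤ := by
    intro μ _ B
    refine ne_top_of_le_ne_top ?_ (lintegral_mono fun x => prob_le_one (μ := κ x) (s := B))
    simp [lintegral_one, measure_ne_top]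
  have hadd : ∀ B : Set X,
      ∫⁻ x, κ x B ∂ρ + ∫⁻ x, κ x B ∂n = ∫⁻ x, κ x B ∂ν + ∫⁻ x, κ x B ∂p := by
    intro B
    rw [← lintegral_add_measure, ← lintegral_add_measure, hPN]
  obtain ⟨i, hi₁, hi₂, hi₃, hip, hin⟩ := s.toJordanDecomposition_spec
  have hpB : ∀ B : Set X, MeasurableSet B → (p B).toReal = s (i ∩ B) := by
    intro B hB
    rw [hpp, hip, SignedMeasure.toMeasureOfZeroLE_apply _ hi₂ hi₁ hB]
    simp
  -- key inequality
  have key : ∀ B : Set X, MeasurableSet B → p B ≤ ∫⁻ x, κ x B ∂p := by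
    intro B hB
    rw [← ENNReal.toReal_le_toReal (measure_ne_top _ _) (hint p B)]
    have hiB : MeasurableSet (i ∩ B) := hi₁.inter hB
    have e1 : (p B).toReal = (ρ (i ∩ B)).toReal - (ν (i ∩ B)).toReal := by
      rw [hpB B hB]
      exact Measure.toSignedMeasure_sub_apply hiB
    rw [hρ _ hiB, hν _ hiB] at e1
    have e2 := hadd (i ∩ B)
    have e2' : (∫⁻ x, κ x (i ∩ B) ∂ρ).toReal + (∫⁻ x, κ x (i ∩ B) ∂n).toReal
        = (∫⁻ x, κ x (i ∩ B) ∂ν).toReal + (∫⁻ x, κ x (i ∩ B) ∂p).toReal := by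
      rw [← ENNReal.toReal_add (hint ρ _) (hint n _),
        ← ENNReal.toReal_add (hint ν _) (hint p _), e2]
    have e3 : (∫⁻ x, κ x (i ∩ B) ∂p).toReal ≤ (∫⁻ x, κ x B ∂p).toReal := by
      refine ENNReal.toReal_mono (hint p B) (lintegral_mono fun x => ?_)
      exact measure_mono Set.inter_subset_right
    have e4 : 0 ≤ (∫⁻ x, κ x (i ∩ B) ∂n).toReal := ENNReal.toReal_nonneg
    linarith
  -- equal total mass
  have total : ∫⁻ x, κ x Set.univ ∂p = p Set.univ := by
    simp [measure_univ, lintegral_one]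
  -- conclude equality
  have h1 := key A hA
  have h2 := key Aᶜ hA.compl
  have hsplit : ∫⁻ x, κ x A ∂p + ∫⁻ x, κ x Aᶜ ∂p = p Set.univ := by
    rw [← lintegral_add_left (κ.measurable_coe hA)]
    simp_rw [measure_add_measure_compl hA]
    exact total
  have hsplit' : p A + p Aᶜ = p Set.univ := measure_add_measure_compl hA
  have fA : p A ≠ ⊤ := measure_ne_top _ _
  have fAc : p Aᶜ ≠ ⊤ := measure_ne_top _ _
  rw [← ENNReal.toReal_eq_toReal_iff' fA (hint p A)]
  have t1 : (p A).toReal ≤ (∫⁻ x, κ x A ∂p).toReal :=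
    ENNReal.toReal_mono (hint p A) h1
  have t2 : (p Aᶜ).toReal ≤ (∫⁻ x, κ x Aᶜ ∂p).toReal :=
    ENNReal.toReal_mono (hint p Aᶜ) h2
  have t3 : (∫⁻ x, κ x A ∂p).toReal + (∫⁻ x, κ x Aᶜ ∂p).toReal = (p Set.univ).toReal := by
    rw [← ENNReal.toReal_add (hint p A) (hint p Aᶜ), hsplit]
  have t4 : (p A).toReal + (p Aᶜ).toReal = (p Set.univ).toReal := by
    rw [← ENNReal.toReal_add fA fAc, hsplit']
  linarith

/-- swapping the measures gives the negative part -/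
lemma jordanPos_swap (ρ ν : Measure X) [IsFiniteMeasure ρ] [IsFiniteMeasure ν] :
    jordanPos ν ρ = (ρ.toSignedMeasure - ν.toSignedMeasure).toJordanDecomposition.negPart := by
  show ((ν.toSignedMeasure - ρ.toSignedMeasure).toJordanDecomposition).posPart = _
  rw [show ν.toSignedMeasure - ρ.toSignedMeasure
      = -(ρ.toSignedMeasure - ν.toSignedMeasure) from (neg_sub _ _).symm,
    SignedMeasure.toJordanDecomposition_neg, JordanDecomposition.neg_posPart]

end Aux

/-- if `ρ ≠ ν` are κ-invariant probability measures, then the normalized Jordan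
parts `ρ₁ = (ρ−ν)₊/(ρ−ν)₊(X)` and `ρ₂ = (ν−ρ)₊/(ν−ρ)₊(X)` are mutually singular κ-invariant
probability measures. -/
theorem jordan_parts_of_invariant_measures {X : Type*} [MeasurableSpace X]
    (κ : Kernel X X) [IsMarkovKernel κ]
    (ρ ν : Measure X) [IsProbabilityMeasure ρ] [IsProbabilityMeasure ν] (hne : ρ ≠ ν)
    (hρ : ∀ A : Set X, MeasurableSet A → ρ A = ∫⁻ x, κ x A ∂ρ)
    (hν : ∀ A : Set X, MeasurableSet A → ν A = ∫⁻ x, κ x A ∂ν) :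
    0 < jordanPos ρ ν Set.univ ∧ 0 < jordanPos ν ρ Set.univ ∧
    IsProbabilityMeasure ((jordanPos ρ ν Set.univ)⁻¹ • jordanPos ρ ν) ∧
    IsProbabilityMeasure ((jordanPos ν ρ Set.univ)⁻¹ • jordanPos ν ρ) ∧
    (∀ A : Set X, MeasurableSet A →
      ((jordanPos ρ ν Set.univ)⁻¹ • jordanPos ρ ν) A =
        ∫⁻ x, κ x A ∂((jordanPos ρ ν Set.univ)⁻¹ • jordanPos ρ ν)) ∧
    (∀ A : Set X, MeasurableSet A →
      ((jordanPos ν ρ Set.univ)⁻¹ • jordanPos ν ρ) A =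
        ∫⁻ x, κ x A ∂((jordanPos ν ρ Set.univ)⁻¹ • jordanPos ν ρ)) ∧
    ((jordanPos ρ ν Set.univ)⁻¹ • jordanPos ρ ν) ⟂ₘ
      ((jordanPos ν ρ Set.univ)⁻¹ • jordanPos ν ρ) := by
  set s := ρ.toSignedMeasure - ν.toSignedMeasure with hs
  have hswap := jordanPos_swap ρ ν
  set p := jordanPos ρ ν with hp
  set n := jordanPos ν ρ with hn
  have hpp : p = s.toJordanDecomposition.posPart := rfl
  -- positivity of total masses
  have huniv : (p Set.univ).toReal = (n Set.univ).toReal := by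
    have h1 : s Set.univ = (ρ Set.univ).toReal - (ν Set.univ).toReal :=
      Measure.toSignedMeasure_sub_apply MeasurableSet.univ
    have h2 : s Set.univ = (p Set.univ).toReal
        - (s.toJordanDecomposition.negPart Set.univ).toReal := by
      conv_lhs => rw [← s.toSignedMeasure_toJordanDecomposition]
      exact Measure.toSignedMeasure_sub_apply MeasurableSet.univ
    rw [hswap]
    simp only [measure_univ, ENNReal.toReal_one, sub_self] at h1
    linarith
  have hpos : 0 < p Set.univ := by
    rw [pos_iff_ne_zero]
    intro h0
    have hn0 : n Set.univ = 0 := by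
      have := huniv
      rw [h0] at this
      simpa [ENNReal.toReal_eq_zero_iff, measure_ne_top] using this.symm
    have hs0 : s = 0 := by
      ext A hA
      have h2 : s A = (p A).toReal
          - (s.toJordanDecomposition.negPart A).toReal := by
        conv_lhs => rw [← s.toSignedMeasure_toJordanDecomposition]
        exact Measure.toSignedMeasure_sub_apply hA
      have pA0 : p A = 0 := measure_mono_null (Set.subset_univ A) h0
      have nA0 : s.toJordanDecomposition.negPart A = 0 := by
        rw [← hswap]; exact measure_mono_null (Set.subset_univ A) hn0
      rw [h2, pA0, nA0]
      simp
    apply hne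
    rw [← Measure.toSignedMeasure_eq_toSignedMeasure_iff]
    exact sub_eq_zero.mp hs0
  have hnpos : 0 < n Set.univ := by
    rw [pos_iff_ne_zero]
    intro h0
    have : (n Set.univ).toReal = 0 := by simp [h0]
    rw [← huniv] at this
    exact absurd (by simpa [ENNReal.toReal_eq_zero_iff, measure_ne_top] using this)
      hpos.ne'
  have hpfin : p Set.univ ≠ ⊤ := measure_ne_top _ _
  have hnfin : n Set.univ ≠ ⊤ := measure_ne_top _ _
  -- probability measures
  have hprob1 : IsProbabilityMeasure ((p Set.univ)⁻¹ • p) :=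
    ⟨by rw [Measure.smul_apply, smul_eq_mul, ENNReal.inv_mul_cancel hpos.ne' hpfin]⟩
  have hprob2 : IsProbabilityMeasure ((n Set.univ)⁻¹ • n) :=
    ⟨by rw [Measure.smul_apply, smul_eq_mul, ENNReal.inv_mul_cancel hnpos.ne' hnfin]⟩
  -- invariance
  have hinv1 : ∀ A : Set X, MeasurableSet A →
      ((p Set.univ)⁻¹ • p) A = ∫⁻ x, κ x A ∂((p Set.univ)⁻¹ • p) := by
    intro A hA
    rw [lintegral_smul_measure, Measure.smul_apply, hp,
      jordanPos_invariant κ ρ ν hρ hν A hA, smul_eq_mul]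
  have hinv2 : ∀ A : Set X, MeasurableSet A →
      ((n Set.univ)⁻¹ • n) A = ∫⁻ x, κ x A ∂((n Set.univ)⁻¹ • n) := by
    intro A hA
    rw [lintegral_smul_measure, Measure.smul_apply, hn,
      jordanPos_invariant κ ν ρ hν hρ A hA, smul_eq_mul]
  -- mutual singularity
  have hsing : ((p Set.univ)⁻¹ • p) ⟂ₘ ((n Set.univ)⁻¹ • n) := by
    have hbase : p ⟂ₘ n := by
      rw [hpp, hswap]
      exact s.toJordanDecomposition.mutuallySingular
    exact ((hbase.symm.smul _).symm.smul _)
  exact ⟨hpos, hnpos, hprob1, hprob2, hinv1, hinv2, hsing⟩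

end
end
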